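/- arXiv:1304.5892 — 12 statements merged into one kernel-verified Lean document; each statement's English description precedes it below -/
import Mathlib

section
/- For n ≥ 2 agents, p ≥ 2 items, Borda utilities, uniform independent profiles, and any policy π of length p with π_1 = 1: the expected utility of agent 1 satisfies ū_1(π) = p + ū_1(π̃), and for every agent i ≠ 1 the expected utility satisfies ū_i(π) = ((p+1)/p)·ū_i(π̃), where π̃ is the policy of length p−1 obtained from π by deleting its first entry (and ū_i(π̃) is computed in the allocation of p−1 items). -/
open Finset

namespace SeqAlloc

/-- Given an agent's ranking `r` (a bijection sending each item to its position,
position `0` being the most preferred), pick the most preferred item of a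
nonempty set `S` of remaining items. -/
def pickItem {p : ℕ} (r : Equiv.Perm (Fin p)) (S : Finset (Fin p)) (h : S.Nonempty) : Fin p :=
  r.symm ((S.image r).min' (h.image r))

/-- Sequential allocation: the agents in the list take turns; each takes her
most preferred remaining item.  Returns the list of (agent, item) pairs. -/
def allocList {n p : ℕ} (R : Fin n → Equiv.Perm (Fin p)) :
    List (Fin n) → Finset (Fin p) → List (Fin n × Fin p)
  | [], _ => []
  | a :: rest, S =>
    if h : S.Nonempty then
      (a, pickItem (R a) S h) :: allocList R rest (S.erase (pickItem (R a) S h))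
    else []

/-- The utility that agent `i` obtains when the items `Fin p` are allocated
sequentially according to the policy `π` under profile `R`, where an item
ranked in (1-indexed) position `k` by an agent is worth `g k` to her. -/
noncomputable def utilAgent {n p : ℕ} (g : ℕ → ℝ) (R : Fin n → Equiv.Perm (Fin p))
    (π : List (Fin n)) (i : Fin n) : ℝ :=
  ((allocList R π Finset.univ).map
    (fun x => if x.1 = i then g (((R i) x.2).val + 1) else 0)).sum

/-- The expected utility of agent `i` under policy `π` for `p` items and scoring
function `g`, the profiles being drawn uniformly and independently. -/
noncomputable def expectedUtil (n p : ℕ) (g : ℕ → ℝ) (π : List (Fin n)) (i : Fin n) : ℝ :=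
  (∑ R : Fin n → Equiv.Perm (Fin p), utilAgent g R π i) / ((p.factorial : ℝ) ^ n)

/-- Expected Borda utility: an item ranked (1-indexed) in position `k` is worth
`p - k + 1`. -/
noncomputable def expectedBordaUtil (n p : ℕ) (π : List (Fin n)) (i : Fin n) : ℝ :=
  expectedUtil n p (fun k => (p : ℝ) - k + 1) π i

/-- The strictly alternating policy `1212…` of length `p` for two agents. -/
def altPolicy (p : ℕ) : List (Fin 2) :=
  (List.range p).map (fun k => if k % 2 = 0 then 0 else 1)

end SeqAlloc

/-!
Condition on the item `x` that agent `1` takes first (her top item). Deleting `x` from every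
ranking turns a uniform profile on `p` items into a uniform profile on `p - 1` items, independent
of `x` and of the positions of `x` in the other agents' rankings, and the rest of the allocation
is the allocation of `π̃` on that reduced profile. For agent `1` every remaining item moves up by
one position, which leaves its Borda score (with `p - 1` items) unchanged, and `x` itself is
worth `p`. For another agent `i` the position `j` of `x` is uniform, and averaging over `j` the
Borda score of an item at reduced position `v` gives `(p + 1) / p` times its score with `p - 1`
items.
-/

open Equiv
open scoped BigOperators

namespace SeqAlloc

section Ranking

variable {m : ℕ}

/-- The ranking of the `m` items other than `x`, which are labelled through `x.succAbove`. -/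
def eraseRank (x : Fin (m + 1)) (r : Perm (Fin (m + 1))) : Perm (Fin m) :=
  removeNone ((finSuccEquiv' x).symm.trans (r.trans (finSuccEquiv' (r x))))

theorem succAbove_eraseRank (x : Fin (m + 1)) (r : Perm (Fin (m + 1))) (k : Fin m) :
    (r x).succAbove (eraseRank x r k) = r (x.succAbove k) := by
  obtain ⟨c, hc⟩ := Fin.exists_succAbove_eq (r.injective.ne (Fin.succAbove_ne x k))
  have hsome :
      ((finSuccEquiv' x).symm.trans (r.trans (finSuccEquiv' (r x)))) (some k) = some c := by
    simp only [Equiv.trans_apply, finSuccEquiv'_symm_some, ← hc, finSuccEquiv'_succAbove]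
  have hc' : eraseRank x r k = c :=
    Option.some_injective _ ((removeNone_some _ ⟨c, hsome⟩).trans hsome)
  rw [hc', hc]

theorem eraseRank_le_eraseRank_iff (x : Fin (m + 1)) (r : Perm (Fin (m + 1))) (a b : Fin m) :
    eraseRank x r a ≤ eraseRank x r b ↔ r (x.succAbove a) ≤ r (x.succAbove b) := by
  rw [← succAbove_eraseRank, ← succAbove_eraseRank, Fin.succAbove_le_succAbove_iff]

/-- The ranking that puts `x` in position `j` and ranks the other items according to `ρ`. -/
def insertRank (x j : Fin (m + 1)) (ρ : Perm (Fin m)) : Perm (Fin (m + 1)) :=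
  (finSuccEquiv' x).trans ((optionCongr ρ).trans (finSuccEquiv' j).symm)

@[simp] theorem insertRank_self (x j : Fin (m + 1)) (ρ : Perm (Fin m)) :
    insertRank x j ρ x = j := by
  simp [insertRank, finSuccEquiv'_at, finSuccEquiv'_symm_none]

@[simp] theorem insertRank_succAbove (x j : Fin (m + 1)) (ρ : Perm (Fin m)) (k : Fin m) :
    insertRank x j ρ (x.succAbove k) = j.succAbove (ρ k) := by
  simp [insertRank, finSuccEquiv'_succAbove, finSuccEquiv'_symm_some]

@[simp] theorem eraseRank_insertRank (x j : Fin (m + 1)) (ρ : Perm (Fin m)) :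
    eraseRank x (insertRank x j ρ) = ρ := by
  ext k
  have h := succAbove_eraseRank x (insertRank x j ρ) k
  rw [insertRank_succAbove, insertRank_self] at h
  rw [Fin.succAbove_right_injective h]

@[simp] theorem insertRank_eraseRank (x : Fin (m + 1)) (r : Perm (Fin (m + 1))) :
    insertRank x (r x) (eraseRank x r) = r := by
  ext y
  rcases eq_or_ne y x with rfl | hne
  · simp
  · obtain ⟨k, rfl⟩ := Fin.exists_succAbove_eq hne
    rw [insertRank_succAbove, succAbove_eraseRank]

end Ranking

section Picking

variable {m p : ℕ}

theorem pickItem_mem (r : Perm (Fin p)) (S : Finset (Fin p)) (h : S.Nonempty) :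
    pickItem r S h ∈ S := by
  obtain ⟨z, hz, hrz⟩ := mem_image.mp (min'_mem (S.image r) (h.image r))
  rwa [pickItem, ← hrz, symm_apply_apply]

theorem pickItem_le (r : Perm (Fin p)) (S : Finset (Fin p)) (h : S.Nonempty) {z : Fin p}
    (hz : z ∈ S) : r (pickItem r S h) ≤ r z := by
  rw [pickItem, apply_symm_apply]
  exact min'_le _ _ (mem_image_of_mem _ hz)

theorem pickItem_eq_of_forall_le (r : Perm (Fin p)) (S : Finset (Fin p)) (h : S.Nonempty)
    {w : Fin p} (hw : w ∈ S) (hmin : ∀ z ∈ S, r w ≤ r z) : pickItem r S h = w :=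
  r.injective <| le_antisymm (pickItem_le r S h hw) (hmin _ (pickItem_mem r S h))

theorem pickItem_univ (r : Perm (Fin (m + 1))) :
    pickItem r univ univ_nonempty = r.symm 0 :=
  pickItem_eq_of_forall_le r _ _ (mem_univ _) fun z _ => by
    simpa only [apply_symm_apply] using Fin.zero_le (r z)

theorem pickItem_image (f : Fin m → Fin p) (r : Perm (Fin p)) (r' : Perm (Fin m))
    (hf : ∀ a b, r' a ≤ r' b → r (f a) ≤ r (f b)) (T : Finset (Fin m)) (hT : T.Nonempty) :
    pickItem r (T.image f) (hT.image f) = f (pickItem r' T hT) := by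
  refine pickItem_eq_of_forall_le r _ _ (mem_image_of_mem f (pickItem_mem r' T hT)) ?_
  rintro _ hz
  obtain ⟨z, hzT, rfl⟩ := mem_image.mp hz
  exact hf _ _ (pickItem_le r' T hT hzT)

theorem allocList_image {n : ℕ} (f : Fin m → Fin p) (hf : Function.Injective f)
    (R : Fin n → Perm (Fin p)) (R' : Fin n → Perm (Fin m))
    (hR : ∀ k a b, R' k a ≤ R' k b → R k (f a) ≤ R k (f b)) :
    ∀ (t : List (Fin n)) (T : Finset (Fin m)),
      allocList R t (T.image f) = (allocList R' t T).map (Prod.map id f)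
  | [], _ => rfl
  | a :: t, T => by
    by_cases hT : T.Nonempty
    · rw [allocList, allocList, dif_pos hT, dif_pos (hT.image f),
        pickItem_image f (R a) (R' a) (hR a) T hT, ← image_erase hf,
        allocList_image f hf R R' hR t]
      rfl
    · rw [allocList, allocList, dif_neg hT, dif_neg (by rwa [image_nonempty])]
      rfl

end Picking

section Bundle

variable {n p : ℕ}

def bundleSum (R : Fin n → Perm (Fin p)) (π : List (Fin n)) (i : Fin n) (f : Fin p → ℝ) :
    ℝ :=
  ((allocList R π univ).map fun z => if z.1 = i then f z.2 else 0).sum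

theorem utilAgent_eq_bundleSum (g : ℕ → ℝ) (R : Fin n → Perm (Fin p)) (π : List (Fin n))
    (i : Fin n) : utilAgent g R π i = bundleSum R π i fun y => g ((R i y).val + 1) :=
  rfl

theorem bundleSum_const_mul (R : Fin n → Perm (Fin p)) (π : List (Fin n)) (i : Fin n)
    (c : ℝ) (f : Fin p → ℝ) :
    bundleSum R π i (fun y => c * f y) = c * bundleSum R π i f := by
  simp only [bundleSum, ← List.sum_map_mul_left, mul_ite, mul_zero]

theorem expect_bundleSum {ι : Type*} [Fintype ι] (R : Fin n → Perm (Fin p)) (π : List (Fin n))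
    (i : Fin n) (f : ι → Fin p → ℝ) :
    𝔼 j, bundleSum R π i (f j) = bundleSum R π i fun y => 𝔼 j, f j y := by
  simp only [bundleSum]
  induction allocList R π univ with
  | nil => simp
  | cons z l ih =>
    simp only [List.map_cons, List.sum_cons, expect_add_distrib, ih]
    split_ifs <;> simp

theorem bundleSum_cons {m : ℕ} (R : Fin n → Perm (Fin (m + 1))) (a : Fin n) (t : List (Fin n))
    (i : Fin n) (f : Fin (m + 1) → ℝ) :
    bundleSum R (a :: t) i f
      = (if a = i then f ((R a).symm 0) else 0)
        + bundleSum (fun k => eraseRank ((R a).symm 0) (R k)) t i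
            (f ∘ ((R a).symm 0).succAbove) := by
  set x := (R a).symm 0
  have hrest : univ.erase x = univ.image x.succAbove := by
    rw [Fin.image_succAbove_univ, compl_singleton]
  rw [bundleSum, allocList, dif_pos univ_nonempty, pickItem_univ, hrest,
    allocList_image x.succAbove Fin.succAbove_right_injective R _
      (fun k a b => (eraseRank_le_eraseRank_iff x (R k) a b).mp)]
  simp [bundleSum, Function.comp_def, x]

end Bundle

section Profiles

variable {n m : ℕ}

/-- The profile in which every agent ranks the items other than `x` as in `P`, agent `a` ranks
`x` on top and every other agent `k` ranks `x` in position `J k`. -/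
def insertProfile (a : Fin n) (x : Fin (m + 1)) (J : { k : Fin n // k ≠ a } → Fin (m + 1))
    (P : Fin n → Perm (Fin m)) (k : Fin n) : Perm (Fin (m + 1)) :=
  insertRank x (if h : k = a then 0 else J ⟨k, h⟩) (P k)

theorem insertProfile_self_symm_zero (a : Fin n) (x : Fin (m + 1))
    (J : { k : Fin n // k ≠ a } → Fin (m + 1)) (P : Fin n → Perm (Fin m)) :
    (insertProfile a x J P a).symm 0 = x := by
  rw [insertProfile, dif_pos rfl, symm_apply_eq, insertRank_self]

def profileEquiv (a : Fin n) :
    (Fin n → Perm (Fin (m + 1))) ≃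
      Fin (m + 1) × ({ k : Fin n // k ≠ a } → Fin (m + 1)) × (Fin n → Perm (Fin m)) where
  toFun R := ((R a).symm 0, fun k => R k ((R a).symm 0), fun k => eraseRank ((R a).symm 0) (R k))
  invFun q := insertProfile a q.1 q.2.1 q.2.2
  left_inv R := by
    funext k
    by_cases h : k = a
    · subst h
      simpa only [insertProfile, dif_pos, apply_symm_apply] using
        insertRank_eraseRank ((R k).symm 0) (R k)
    · simp only [insertProfile, dif_neg h, insertRank_eraseRank]
  right_inv := by
    rintro ⟨x, J, P⟩
    simp only [insertProfile_self_symm_zero]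
    refine Prod.ext rfl (Prod.ext (funext fun k => ?_) (funext fun k => ?_))
    · simp only [insertProfile, dif_neg k.2, insertRank_self]
    · simp only [insertProfile, eraseRank_insertRank]

theorem expect_eq_expect_insertProfile {M : Type*} [AddCommMonoid M] [Module ℚ≥0 M] (a : Fin n)
    (F : (Fin n → Perm (Fin (m + 1))) → M) :
    𝔼 R, F R = 𝔼 x, 𝔼 J, 𝔼 P, F (insertProfile a x J P) := by
  rw [Fintype.expect_equiv (profileEquiv a) _ (fun q => F (insertProfile a q.1 q.2.1 q.2.2))
    fun R => congrArg F ((profileEquiv a).symm_apply_apply R).symm]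
  simp only [← univ_product_univ, expect_product]

theorem utilAgent_insertProfile (g : ℕ → ℝ) (a : Fin n) (t : List (Fin n)) (i : Fin n)
    (x : Fin (m + 1)) (J : { k : Fin n // k ≠ a } → Fin (m + 1)) (P : Fin n → Perm (Fin m)) :
    utilAgent g (insertProfile a x J P) (a :: t) i
      = (if a = i then g ((if h : i = a then 0 else J ⟨i, h⟩ : Fin (m + 1)).val + 1) else 0)
        + bundleSum P t i fun y =>
            g (((if h : i = a then 0 else J ⟨i, h⟩ : Fin (m + 1)).succAbove (P i y)).val + 1) :=
  by
  rw [utilAgent_eq_bundleSum, bundleSum_cons, insertProfile_self_symm_zero]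
  simp only [insertProfile, eraseRank_insertRank, insertRank_self, Function.comp_def,
    insertRank_succAbove]

end Profiles

theorem expect_comp_eval {ι β M : Type*} [Fintype ι] [DecidableEq ι] [Fintype β] [Nonempty β]
    [AddCommMonoid M] [Module ℚ≥0 M] (a : ι) (G : β → M) :
    𝔼 J : ι → β, G (J a) = 𝔼 b, G b := by
  rw [Fintype.expect_equiv (funSplitAt a β) (fun J => G (J a)) (fun q => G q.1) fun _ => rfl,
    ← univ_product_univ, expect_product]
  simp only [Fintype.expect_const]

section Expected

variable {n m : ℕ}

theorem expectedUtil_eq_expect (p : ℕ) (g : ℕ → ℝ) (π : List (Fin n)) (i : Fin n) :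
    expectedUtil n p g π i = 𝔼 R : Fin n → Perm (Fin p), utilAgent g R π i := by
  rw [Fintype.expect_eq_sum_div_card, expectedUtil]
  simp [Fintype.card_perm]

theorem expectedUtil_cons_self (g : ℕ → ℝ) (a : Fin n) (t : List (Fin n)) :
    expectedUtil n (m + 1) g (a :: t) a = g 1 + expectedUtil n m (fun k => g (k + 1)) t a := by
  simp only [expectedUtil_eq_expect, expect_eq_expect_insertProfile a,
    utilAgent_insertProfile, dif_pos, if_pos, Fin.val_zero, zero_add, Fin.zero_succAbove,
    Fin.val_succ, expect_add_distrib, Fintype.expect_const]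
  rfl

theorem expectedUtil_cons_of_ne (g h : ℕ → ℝ) (c : ℝ) {a i : Fin n} (hi : i ≠ a)
    (hg : ∀ v : Fin m, 𝔼 j : Fin (m + 1), g ((j.succAbove v).val + 1) = c * h (v.val + 1))
    (t : List (Fin n)) :
    expectedUtil n (m + 1) g (a :: t) i = c * expectedUtil n m h t i := by
  simp only [expectedUtil_eq_expect, expect_eq_expect_insertProfile a,
    utilAgent_insertProfile, dif_neg hi, if_neg hi.symm, zero_add, Fintype.expect_const]
  rw [expect_comm, mul_expect]
  refine expect_congr rfl fun P _ => ?_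
  rw [expect_comp_eval (⟨i, hi⟩ : { k : Fin n // k ≠ a })
      (fun j : Fin (m + 1) => bundleSum P t i fun y => g ((j.succAbove (P i y)).val + 1)),
    expect_bundleSum]
  simp only [hg, bundleSum_const_mul, utilAgent_eq_bundleSum]

end Expected

section Borda

variable {n m : ℕ}

theorem sum_val_succAbove (v : Fin m) :
    ∑ j : Fin (m + 1), ((j.succAbove v).val : ℝ) = (m + 1) * v + (v + 1) := by
  have hval : ∀ j : Fin (m + 1),
      ((j.succAbove v).val : ℝ) = v + if j ≤ v.castSucc then 1 else 0 := by
    intro j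
    split_ifs with h
    · rw [Fin.succAbove_of_le_castSucc _ _ h, Fin.val_succ, Nat.cast_succ]
    · rw [Fin.succAbove_of_castSucc_lt _ _ (not_le.mp h), Fin.val_castSucc, add_zero]
  simp only [hval, sum_add_distrib, sum_const, card_univ, Fintype.card_fin, nsmul_eq_mul,
    sum_boole, filter_ge_eq_Iic, Fin.card_Iic, Fin.val_castSucc]
  push_cast
  ring

theorem expect_borda_succAbove (v : Fin m) :
    𝔼 j : Fin (m + 1), (((m + 1 : ℕ) : ℝ) - ((j.succAbove v).val + 1 : ℕ) + 1)
      = ((m + 1 : ℕ) + 1) / (m + 1 : ℕ) * ((m : ℝ) - (v.val + 1 : ℕ) + 1) := by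
  rw [Fintype.expect_eq_sum_div_card, Fintype.card_fin]
  push_cast
  simp only [sum_add_distrib, sum_sub_distrib, sum_val_succAbove, sum_const, card_univ,
    Fintype.card_fin, nsmul_eq_mul]
  field_simp
  push_cast
  ring

theorem expectedBordaUtil_cons_self (a : Fin n) (t : List (Fin n)) :
    expectedBordaUtil n (m + 1) (a :: t) a = ((m + 1 : ℕ) : ℝ) + expectedBordaUtil n m t a := by
  rw [expectedBordaUtil, expectedUtil_cons_self, expectedBordaUtil]
  congr 2
  · push_cast
    ring
  · funext k
    push_cast
    ring

theorem expectedBordaUtil_cons_of_ne {a i : Fin n} (hi : i ≠ a) (t : List (Fin n)) :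
    expectedBordaUtil n (m + 1) (a :: t) i
      = (((m + 1 : ℕ) : ℝ) + 1) / ((m + 1 : ℕ) : ℝ) * expectedBordaUtil n m t i :=
  expectedUtil_cons_of_ne _ _ _ hi expect_borda_succAbove t

end Borda

end SeqAlloc

/-- For `n ≥ 2` agents, `p ≥ 2` items, Borda utilities and uniform
independent profiles, and any policy `π` of length `p` whose first entry is agent `1`
(here agent `⟨0, _⟩`): the expected utility of agent `1` satisfies
`ū₁(π) = p + ū₁(π̃)`, and for every other agent `i`,
`ū_i(π) = ((p+1)/p) · ū_i(π̃)`, where `π̃ = π.tail` is used to allocate `p - 1` items. -/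
theorem stmt0 (n p : ℕ) (hn : 2 ≤ n) (hp : 2 ≤ p)
    (π : List (Fin n))
    (hhead : π.head? = some ⟨0, by omega⟩) :
    SeqAlloc.expectedBordaUtil n p π ⟨0, by omega⟩
      = p + SeqAlloc.expectedBordaUtil n (p - 1) π.tail ⟨0, by omega⟩
    ∧ ∀ i : Fin n, i ≠ ⟨0, by omega⟩ →
      SeqAlloc.expectedBordaUtil n p π i
        = ((p : ℝ) + 1) / p * SeqAlloc.expectedBordaUtil n (p - 1) π.tail i := by
  obtain ⟨m, rfl⟩ : ∃ m, p = m + 1 := ⟨p - 1, by omega⟩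
  obtain ⟨a, t, rfl⟩ : ∃ a t, π = a :: t :=
    List.exists_cons_of_ne_nil (by rintro rfl; simp at hhead)
  obtain rfl : a = ⟨0, _⟩ := Option.some_inj.mp hhead
  rw [Nat.add_sub_cancel, List.tail_cons]
  exact ⟨SeqAlloc.expectedBordaUtil_cons_self _ t,
    fun i hi => SeqAlloc.expectedBordaUtil_cons_of_ne hi t⟩
end

section
/- For n ≥ 2 agents, p ≥ 2 items, uniform independent profiles, a policy π of length p with π_1 = 1, any agent i ≠ 1, and any q ∈ {1,…,p}: a_i(q,π) = ((q−1)/p)·a_i(q−1,π̃) + ((p−q)/p)·a_i(q,π̃), where for a policy ρ of length r, a_i(q,ρ) denotes the probability (over uniform independent profiles on r items) that agent i receives the item she ranks in position r−q+1 of her own ranking, with the convention a_i(0,ρ) = 0. -/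
open Finset

open scoped Classical in
/-- `probGet n r π i q` is the probability, over uniform independent profiles on `r`
items, that under the sequential allocation with policy `π` agent `i` receives the
item she ranks in (1-indexed) position `r - q + 1` of her own ranking, i.e. the item
of Borda utility `q` for her.  (For `q = 0` the position is out of range, so the
probability is `0`, matching the convention `a_i(0,ρ) = 0`.) -/
noncomputable def probGet (n r : ℕ) (π : List (Fin n)) (i : Fin n) (q : ℕ) : ℝ :=
  (∑ R : Fin n → Equiv.Perm (Fin r),
      if ∃ x ∈ SeqAlloc.allocList R π Finset.univ, x.1 = i ∧ ((R i) x.2).val = r - q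
      then (1 : ℝ) else 0) / ((r.factorial : ℝ) ^ n)


/-! Agent `a` first takes her top item `x`. Recording, for every other agent `j`, the position
`τ j` of `x` in her ranking, together with the rankings `r` that all agents induce on the remaining
items, is a bijection of profiles; under it the rest of the allocation is the allocation of `π̃`
under `r`, and `τ i` is uniform and independent of `r`. Agent `i` gets the item at position `k`
exactly when under `r` she gets the one at position `k` (if `k < τ i`) or `k - 1` (if `τ i < k`),
and counting the values of `τ i` gives the weights `(q - 1) / p` and `(p - q) / p`. -/

lemma Fin.card_filter_lt_val {m k : ℕ} (hk : k ≤ m) :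
    #{t : Fin (m + 1) | k < (t : ℕ)} = m - k := by
  have : ({t : Fin (m + 1) | k < (t : ℕ)} : Finset _) = Ioi ⟨k, by omega⟩ := by
    ext; simp [Fin.lt_def]
  simp [this]

lemma Fintype.card_filter_apply {ι α : Type*} [Fintype ι] [DecidableEq ι] [Fintype α]
    [DecidableEq α] (i : ι) (P : α → Prop) [DecidablePred P] :
    #{τ : ι → α | P (τ i)} = #{a | P a} * Fintype.card α ^ (Fintype.card ι - 1) := by
  calc #{τ : ι → α | P (τ i)}
      = ∑ a ∈ {a | P a}, #{τ : ι → α | τ i = a} := by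
        refine (card_eq_sum_card_fiberwise (f := fun τ => τ i) (t := {a | P a})
          fun τ hτ => by simpa using hτ).trans
          (Finset.sum_congr rfl fun a ha => congr_arg Finset.card ?_)
        ext τ
        simp only [mem_filter, mem_univ, true_and] at ha ⊢
        exact ⟨fun h => h.2, fun h => ⟨h ▸ ha, h⟩⟩
    _ = #{a | P a} * Fintype.card α ^ (Fintype.card ι - 1) := by
        refine (sum_const_nat fun a _ => ?_).trans rfl
        simpa using Fintype.card_filter_piFinset_const (univ : Finset α) i a

lemma Fin.val_succAbove_eq_iff {m : ℕ} (t : Fin (m + 1)) (w : Fin m) (k : ℕ) :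
    (t.succAbove w : ℕ) = k ↔ (k < t ∧ (w : ℕ) = k) ∨ (t < k ∧ (w : ℕ) = k - 1) := by
  rcases lt_or_ge w.castSucc t with h | h
  · rw [Fin.succAbove_of_castSucc_lt _ _ h]
    simp only [Fin.lt_def, Fin.val_castSucc] at h ⊢
    omega
  · rw [Fin.succAbove_of_le_castSucc _ _ h]
    simp only [Fin.le_def, Fin.val_castSucc, Fin.val_succ] at h ⊢
    omega

namespace SeqAlloc

variable {m n : ℕ}

/-- The ranking of `Fin (m + 1)` that puts item `x` at position `t` and orders the remaining
items among themselves as `r` orders `Fin m`. -/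
def extendPerm (x t : Fin (m + 1)) (r : Equiv.Perm (Fin m)) : Equiv.Perm (Fin (m + 1)) :=
  (finSuccEquiv' x).trans (r.optionCongr.trans (finSuccEquiv' t).symm)

@[simp] lemma extendPerm_apply_self (x t : Fin (m + 1)) (r : Equiv.Perm (Fin m)) :
    extendPerm x t r x = t := by
  simp [extendPerm]

@[simp] lemma extendPerm_apply_succAbove (x t : Fin (m + 1)) (r : Equiv.Perm (Fin m))
    (v : Fin m) : extendPerm x t r (x.succAbove v) = t.succAbove (r v) := by
  simp [extendPerm, finSuccEquiv'_succAbove]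

@[simp] lemma extendPerm_symm_apply (x t : Fin (m + 1)) (r : Equiv.Perm (Fin m)) :
    (extendPerm x t r).symm t = x := by
  rw [Equiv.symm_apply_eq, extendPerm_apply_self]

lemma extendPerm_inj {x t t' : Fin (m + 1)} {r r' : Equiv.Perm (Fin m)}
    (h : extendPerm x t r = extendPerm x t' r') : t = t' ∧ r = r' := by
  have ht : t = t' := by simpa using congr($h x)
  subst ht
  refine ⟨rfl, Equiv.ext fun v => Fin.succAbove_right_injective (p := t) ?_⟩
  simpa using congr($h (x.succAbove v))

lemma pickItem_univ_s1 (ρ : Equiv.Perm (Fin (m + 1)))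
    (h : (univ : Finset (Fin (m + 1))).Nonempty) :
    pickItem ρ univ h = ρ.symm 0 := by
  rw [pickItem]
  congr 1
  exact le_antisymm (min'_le _ _ (mem_image_of_mem ρ (mem_univ (ρ.symm 0))) |>.trans_eq (by simp))
    (Fin.zero_le _)

lemma pickItem_extendPerm_image (x t : Fin (m + 1)) (ρ : Equiv.Perm (Fin m)) {S : Finset (Fin m)}
    (hS : S.Nonempty) :
    pickItem (extendPerm x t ρ) (S.image x.succAbove) (hS.image _)
      = x.succAbove (pickItem ρ S hS) := by
  have himage :
      (S.image x.succAbove).image (extendPerm x t ρ) = (S.image ρ).image t.succAbove := by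
    simp only [image_image, Function.comp_def, extendPerm_apply_succAbove]
  rw [pickItem, Equiv.symm_apply_eq, pickItem, extendPerm_apply_succAbove, Equiv.apply_symm_apply]
  simp only [himage, min'_image (Fin.strictMono_succAbove t).monotone]

lemma allocList_extendPerm_image (x : Fin (m + 1)) (t : Fin n → Fin (m + 1))
    (r : Fin n → Equiv.Perm (Fin m)) (L : List (Fin n)) (S : Finset (Fin m)) :
    allocList (fun j => extendPerm x (t j) (r j)) L (S.image x.succAbove)
      = (allocList r L S).map (Prod.map id x.succAbove) := by
  induction L generalizing S with
  | nil => simp [allocList]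
  | cons a L ih =>
    by_cases hS : S.Nonempty
    · rw [allocList, allocList, dif_pos hS, dif_pos (hS.image x.succAbove)]
      rw [pickItem_extendPerm_image _ _ _ hS, ← image_erase Fin.succAbove_right_injective, ih]
      rfl
    · simp [allocList, hS]

lemma allocList_extendPerm_cons (x : Fin (m + 1)) (t : Fin n → Fin (m + 1))
    (r : Fin n → Equiv.Perm (Fin m)) (a : Fin n) (ha : t a = 0) (L : List (Fin n)) :
    allocList (fun j => extendPerm x (t j) (r j)) (a :: L) univ
      = (a, x) :: (allocList r L univ).map (Prod.map id x.succAbove) := by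
  have hpick : (extendPerm x (t a) (r a)).symm 0 = x := by
    rw [Equiv.symm_apply_eq, extendPerm_apply_self, ha]
  rw [allocList, dif_pos univ_nonempty, pickItem_univ_s1, hpick, ← compl_singleton,
    ← Fin.image_succAbove_univ, allocList_extendPerm_image]


def ReceivesRank (R : Fin n → Equiv.Perm (Fin m)) (π : List (Fin n)) (i : Fin n) (k : ℕ) :
    Prop :=
  ∃ x ∈ allocList R π univ, x.1 = i ∧ (R i x.2 : ℕ) = k

/-- Agent `a` ranks item `τ a` first, every other agent `j` ranks it at position `τ j`, and all
agents order the remaining items as `r` does. -/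
def splitProfile (a : Fin n) (τ : Fin n → Fin (m + 1)) (r : Fin n → Equiv.Perm (Fin m)) :
    Fin n → Equiv.Perm (Fin (m + 1)) :=
  fun j => extendPerm (τ a) (Function.update τ a 0 j) (r j)

lemma splitProfile_bijective (a : Fin n) :
    Function.Bijective (Function.uncurry (splitProfile (m := m) a)) := by
  rw [Fintype.bijective_iff_injective_and_card]
  refine ⟨?_, by simp [Fintype.card_perm, Nat.factorial_succ, mul_pow]⟩
  rintro ⟨τ, r⟩ ⟨σ, s⟩ h
  replace h : ∀ j, splitProfile a τ r j = splitProfile a σ s j := congr_fun h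
  have hx : τ a = σ a := by
    simpa [splitProfile] using congr(Equiv.symm $(h a) 0)
  have hj j := extendPerm_inj (by simpa only [splitProfile, hx] using h j)
  refine Prod.ext (funext fun j => ?_) (funext fun j => (hj j).2)
  rcases eq_or_ne j a with rfl | hja
  · exact hx
  · simpa [Function.update_of_ne hja] using (hj j).1

lemma receivesRank_splitProfile_cons {a i : Fin n} (hi : i ≠ a) (τ : Fin n → Fin (m + 1))
    (r : Fin n → Equiv.Perm (Fin m)) (L : List (Fin n)) (k : ℕ) :
    ReceivesRank (splitProfile a τ r) (a :: L) i k ↔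
      (k < τ i ∧ ReceivesRank r L i k) ∨
        ((τ i : ℕ) < k ∧ ReceivesRank r L i (k - 1)) := by
  unfold ReceivesRank splitProfile
  rw [allocList_extendPerm_cons _ _ _ _ (Function.update_self ..)]
  simp [hi.symm, Function.update_of_ne hi, Fin.val_succAbove_eq_iff, and_or_left, exists_or,
    and_left_comm (a := (_, _) ∈ _)]

open scoped Classical in
lemma card_receivesRank_cons {a i : Fin n} (hi : i ≠ a) (L : List (Fin n)) {k : ℕ}
    (hk : k ≤ m) :
    #{R : Fin n → Equiv.Perm (Fin (m + 1)) | ReceivesRank R (a :: L) i k}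
      = (m + 1) ^ (n - 1) * ((m - k) * #{r : Fin n → Equiv.Perm (Fin m) | ReceivesRank r L i k}
          + k * #{r : Fin n → Equiv.Perm (Fin m) | ReceivesRank r L i (k - 1)}) := by
  calc #{R : Fin n → Equiv.Perm (Fin (m + 1)) | ReceivesRank R (a :: L) i k}
      = #((({τ | k < τ i} : Finset (Fin n → Fin (m + 1))) ×ˢ
              ({r | ReceivesRank r L i k} : Finset (Fin n → Equiv.Perm (Fin m)))) ∪
          (({τ | (τ i : ℕ) < k} : Finset (Fin n → Fin (m + 1))) ×ˢ
              ({r | ReceivesRank r L i (k - 1)} : Finset (Fin n → Equiv.Perm (Fin m))))) := by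
        refine (card_equiv (.ofBijective _ (splitProfile_bijective a)) fun ⟨τ, r⟩ => ?_).symm
        simp [receivesRank_splitProfile_cons hi]
    _ = #{τ : Fin n → Fin (m + 1) | k < τ i}
            * #{r : Fin n → Equiv.Perm (Fin m) | ReceivesRank r L i k}
          + #{τ : Fin n → Fin (m + 1) | (τ i : ℕ) < k}
            * #{r : Fin n → Equiv.Perm (Fin m) | ReceivesRank r L i (k - 1)} := by
        rw [card_union_of_disjoint, card_product, card_product]
        simp only [disjoint_left, mem_product, mem_filter, mem_univ, true_and]
        omega
    _ = _ := by
        simp only [Fintype.card_filter_apply i (fun t : Fin (m + 1) => k < (t : ℕ)),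
          Fintype.card_filter_apply i (fun t : Fin (m + 1) => (t : ℕ) < k),
          Fin.card_filter_lt_val hk, Fin.card_filter_val_lt, Fintype.card_fin,
          min_eq_right (by omega : k ≤ m + 1)]
        ring

open scoped Classical in
lemma probGet_eq_card (n r : ℕ) (π : List (Fin n)) (i : Fin n) (q : ℕ) :
    probGet n r π i q = #{R : Fin n → Equiv.Perm (Fin r) | ReceivesRank R π i (r - q)}
      / (r.factorial : ℝ) ^ n := by
  rw [probGet, sum_boole]
  unfold ReceivesRank
  congr

end SeqAlloc

/-- For `n ≥ 2` agents, `p ≥ 2` items, uniform independent profiles,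
a policy `π` of length `p` with first entry agent `1`, any agent `i ≠ 1` and any
`q ∈ {1,…,p}`:
`a_i(q,π) = ((q−1)/p)·a_i(q−1,π̃) + ((p−q)/p)·a_i(q,π̃)`. -/
theorem stmt1 (n p : ℕ) (hn : 2 ≤ n)
    (π : List (Fin n))
    (hhead : π.head? = some ⟨0, by omega⟩)
    (i : Fin n) (hi : i ≠ ⟨0, by omega⟩)
    (q : ℕ) (hq1 : 1 ≤ q) (hqp : q ≤ p) :
    probGet n p π i q
      = ((q : ℝ) - 1) / p * probGet n (p - 1) π.tail i (q - 1)
        + ((p : ℝ) - q) / p * probGet n (p - 1) π.tail i q := by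
  obtain ⟨m, rfl⟩ : ∃ m, p = m + 1 := ⟨p - 1, by omega⟩
  obtain ⟨L, rfl⟩ := List.head?_eq_some_iff.mp hhead
  rw [List.tail_cons, Nat.add_sub_cancel, SeqAlloc.probGet_eq_card, SeqAlloc.probGet_eq_card,
    SeqAlloc.probGet_eq_card, SeqAlloc.card_receivesRank_cons hi L (by omega : m + 1 - q ≤ m),
    show m - (q - 1) = m + 1 - q by omega, show m - (m + 1 - q) = q - 1 by omega,
    show m + 1 - q - 1 = m - q by omega]
  obtain ⟨k, rfl⟩ : ∃ k, n = k + 1 := ⟨n - 1, by omega⟩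
  push_cast [Nat.factorial_succ, hq1, hqp]
  rw [mul_pow]
  field_simp
  ring
end

section
/- For every p ≥ 1, Σ_{σ ∈ S_p} Σ_{i=1}^p max{i, σ(i)} = p! · (p+1)(4p−1)/6, where S_p is the set of all permutations of {1,2,…,p}. Equivalently, for two agents with Borda utilities and uniform independent profiles, the expected utilitarian social welfare of the mechanism that gives each item to the agent who values it more is (p+1)(4p−1)/6. -/
open Finset

lemma sumT (n : ℕ) :
    6 * (∑ i ∈ range n, ∑ j ∈ range n, max (i+1) (j+1)) + n = 4*n^3 + 3*n^2 := by
  induction n with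
  | zero => simp
  | succ n ih =>
    have h1 : (∑ i ∈ range (n+1), ∑ j ∈ range (n+1), max (i+1) (j+1))
        = (∑ i ∈ range n, ∑ j ∈ range n, max (i+1) (j+1)) + (n+1)*(2*n+1) := by
      rw [Finset.sum_range_succ]
      have h2 : ∀ i ∈ range n, (∑ j ∈ range (n+1), max (i+1) (j+1))
          = (∑ j ∈ range n, max (i+1) (j+1)) + (n+1) := by
        intro i hi
        simp only [mem_range] at hi
        rw [Finset.sum_range_succ]
        congr 1
        omega
      rw [Finset.sum_congr rfl h2, Finset.sum_add_distrib]
      have h3 : (∑ j ∈ range (n+1), max (n+1) (j+1)) = (n+1)*(n+1) := by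
        have h4 : ∀ j ∈ range (n+1), max (n+1) (j+1) = n+1 := by
          intro j hj; simp only [mem_range] at hj; omega
        rw [Finset.sum_congr rfl h4]; simp [mul_comm]
      rw [h3]; simp [Finset.sum_const]; ring
    rw [h1]; nlinarith [ih]

lemma key (n : ℕ) (i : Fin (n+1)) (F : Fin (n+1) → ℝ) :
    ∑ σ : Equiv.Perm (Fin (n+1)), F (σ i) = (n.factorial : ℝ) * ∑ j, F j := by
  have h1 : ∑ σ : Equiv.Perm (Fin (n+1)), F (σ i)
      = ∑ σ : Equiv.Perm (Fin (n+1)), F (σ 0) := by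
    refine Fintype.sum_bijective (fun σ => σ * Equiv.swap 0 i)
      (Group.mulRight_bijective _) _ _ ?_
    intro σ
    simp [Equiv.Perm.mul_apply, Equiv.swap_apply_right]
  rw [h1, ← Equiv.sum_comp (Equiv.Perm.decomposeFin.symm) (fun σ => F (σ 0)),
    Fintype.sum_prod_type]
  simp only [Equiv.Perm.decomposeFin_symm_apply_zero]
  rw [Finset.mul_sum]
  exact Finset.sum_congr rfl fun j _ => by
    simp [Finset.sum_const, Fintype.card_perm, mul_comm]

/-- For every `p ≥ 1`,
`Σ_{σ ∈ S_p} Σ_{i=1}^p max{i, σ(i)} = p! · (p+1)(4p−1)/6`.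
Permutations of `{1,…,p}` are modelled as `Equiv.Perm (Fin p)`, a value
`i ∈ {1,…,p}` corresponding to `i.val + 1`.  This is the expected utilitarian
social welfare (times `p!`) of the mechanism giving each item to the agent who
values it more, for two agents with Borda utilities. -/
theorem stmt3 (p : ℕ) (hp : 1 ≤ p) :
    (∑ σ : Equiv.Perm (Fin p), ∑ i : Fin p,
        (max ((i : ℕ) + 1) (((σ i : Fin p) : ℕ) + 1) : ℝ))
      = (p.factorial : ℝ) * ((p : ℝ) + 1) * (4 * (p : ℝ) - 1) / 6 := by
  obtain ⟨n, rfl⟩ : ∃ n, p = n + 1 := ⟨p - 1, by omega⟩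
  rw [Finset.sum_comm]
  have h1 : ∀ i : Fin (n+1),
      (∑ σ : Equiv.Perm (Fin (n+1)), (max ((i : ℕ) + 1) ((σ i : ℕ) + 1) : ℝ))
        = (n.factorial : ℝ) * ∑ j : Fin (n+1), (max ((i : ℕ) + 1) ((j : ℕ) + 1) : ℝ) :=
    fun i => key n i (fun j => (max ((i : ℕ) + 1) ((j : ℕ) + 1) : ℝ))
  rw [Finset.sum_congr rfl (fun i _ => h1 i), ← Finset.mul_sum]
  have h2 : (∑ i : Fin (n+1), ∑ j : Fin (n+1), (max ((i : ℕ) + 1) ((j : ℕ) + 1) : ℝ))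
      = ((∑ i ∈ range (n+1), ∑ j ∈ range (n+1), max (i+1) (j+1) : ℕ) : ℝ) := by
    push_cast
    rw [Finset.sum_range fun i => ∑ j ∈ range (n+1), (max (i+1) (j+1) : ℝ)]
    congr 1; ext i
    rw [Finset.sum_range fun j => (max (i.1+1) (j+1) : ℝ)]
  rw [h2]
  have h4 : 6 * ((∑ i ∈ range (n+1), ∑ j ∈ range (n+1), max (i+1) (j+1) : ℕ) : ℝ)
      + ((n:ℝ)+1) = 4*((n:ℝ)+1)^3 + 3*((n:ℝ)+1)^2 := by
    exact_mod_cast congrArg (Nat.cast : ℕ → ℝ) (sumT (n+1))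
  have h5 : ((n+1).factorial : ℝ) = ((n:ℝ)+1) * (n.factorial : ℝ) := by
    rw [Nat.factorial_succ]; push_cast; ring
  rw [h5]
  have hS : ((∑ i ∈ range (n+1), ∑ j ∈ range (n+1), max (i+1) (j+1) : ℕ) : ℝ)
      = (4*((n:ℝ)+1)^3 + 3*((n:ℝ)+1)^2 - ((n:ℝ)+1)) / 6 := by linarith
  rw [hS]
  push_cast
  ring
end

section
/- Fix n ≥ 1 and define W(p) = (1/(p!)^n) · Σ over all n-tuples (σ_1,…,σ_n) ∈ (S_p)^n of Σ_{q=1}^p max_{1≤i≤n} σ_i(q). Then W(p) = np²/(n+1) + p/2 + O(1) as p → ∞; that is, there exists a constant C (depending only on n) such that |W(p) − np²/(n+1) − p/2| ≤ C for all p ≥ 1. -/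
open Finset

/-- The expected utilitarian social welfare `W(p)` of the best-preference mechanism
with `n` agents, Borda utilities and independent uniformly random rankings:
`W(p) = (1/(p!)^n) · Σ_{(σ₁,…,σ_n) ∈ (S_p)^n} Σ_{q=1}^p max_{1≤i≤n} σ_i(q)`. -/
noncomputable def bestPrefWelfare (n p : ℕ) : ℝ :=
  (∑ σ : Fin n → Equiv.Perm (Fin p), ∑ q : Fin p,
      ((Finset.univ.sup (fun i : Fin n => ((σ i q : Fin p) : ℕ) + 1) : ℕ) : ℝ))
    / ((p.factorial : ℝ) ^ n)

/-! Each `σ_i(q)` is uniform on `{1,…,p}` and the `σ_i` are independent, so `W(p)` is `p` times the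
expected maximum of `n` independent uniform values, i.e. `W(p) = p · Σ_{k<p} (1 - (k/p)^n)
= p² - Σ_{k<p} k^n / p^(n-1)`. Faulhaber's formula
`Σ_{k<p} k^n = p^(n+1)/(n+1) - p^n/2 + O(p^(n-1))` then gives the expansion. -/

namespace Equiv.Perm

variable {ι α M : Type*} [Fintype ι] [DecidableEq ι] [Fintype α] [DecidableEq α] [AddCommMonoid M]

theorem sum_pi_apply_eq_sum_pi_apply (g : (ι → α) → M) (b b' : ι → α) :
    ∑ σ : ι → Perm α, g (fun i => σ i (b i)) = ∑ σ : ι → Perm α, g (fun i => σ i (b' i)) :=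
  Fintype.sum_equiv (Equiv.piCongrRight fun i => Equiv.mulRight (swap (b i) (b' i))) _ _
    fun σ => by simp [Perm.mul_apply]

theorem card_pow_smul_sum_pi_apply (g : (ι → α) → M) (b : ι → α) :
    (Fintype.card α ^ Fintype.card ι) • ∑ σ : ι → Perm α, g (fun i => σ i (b i)) =
      ((Fintype.card α).factorial ^ Fintype.card ι) • ∑ v, g v := by
  -- average over the base point `b`: for each `σ`, `b' ↦ (σ i (b' i))_i` is a bijection
  calc (Fintype.card α ^ Fintype.card ι) • ∑ σ : ι → Perm α, g (fun i => σ i (b i))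
      = ∑ b' : ι → α, ∑ σ : ι → Perm α, g (fun i => σ i (b' i)) := by
        rw [← Fintype.card_fun, ← card_univ, ← sum_const]
        exact sum_congr rfl fun b' _ => sum_pi_apply_eq_sum_pi_apply g b b'
    _ = ∑ σ : ι → Perm α, ∑ v, g v := by
        rw [sum_comm]
        exact sum_congr rfl fun σ _ =>
          Fintype.sum_equiv (Equiv.piCongrRight σ) _ _ fun _ => rfl
    _ = ((Fintype.card α).factorial ^ Fintype.card ι) • ∑ v, g v := by
        rw [sum_const, card_univ, Fintype.card_fun, Fintype.card_perm]

end Equiv.Perm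

theorem Fin.card_filter_forall_val_lt {ι : Type*} [Fintype ι] [DecidableEq ι] {p k : ℕ}
    (hk : k ≤ p) :
    #{v : ι → Fin p | ∀ i, (v i : ℕ) < k} = k ^ Fintype.card ι := by
  have : ({v : ι → Fin p | ∀ i, (v i : ℕ) < k} : Finset _) =
      Fintype.piFinset fun _ => ({x : Fin p | (x : ℕ) < k} : Finset _) := by
    ext v; simp
  simp [this, Fin.card_filter_val_lt, hk]

theorem Fin.sup_val_add_one_eq_card {ι : Type*} [Fintype ι] {p : ℕ} (v : ι → Fin p) :
    univ.sup (fun i => (v i : ℕ) + 1) = #{k ∈ range p | ∃ i, k ≤ (v i : ℕ)} := by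
  have : ({k ∈ range p | ∃ i, k ≤ (v i : ℕ)} : Finset ℕ) =
      range (univ.sup fun i => (v i : ℕ) + 1) := by
    ext k
    simp only [mem_filter, mem_range, Finset.lt_sup_iff, mem_univ, true_and, Nat.lt_succ_iff]
    exact and_iff_right_of_imp fun ⟨i, hi⟩ => hi.trans_lt (v i).isLt
  rw [this, card_range]

theorem Fin.sum_sup_val_add_one {ι : Type*} [Fintype ι] [DecidableEq ι] (p : ℕ) :
    ∑ v : ι → Fin p, univ.sup (fun i => (v i : ℕ) + 1) =
      ∑ k ∈ range p, (p ^ Fintype.card ι - k ^ Fintype.card ι) := by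
  simp only [Fin.sup_val_add_one_eq_card, card_filter]
  rw [sum_comm]
  refine sum_congr rfl fun k hk => ?_
  have hsplit := card_filter_add_card_filter_not (s := (univ : Finset (ι → Fin p)))
    fun v => ∀ i, (v i : ℕ) < k
  simp only [card_univ, Fintype.card_fun, Fintype.card_fin, not_forall, not_lt,
    Fin.card_filter_forall_val_lt (mem_range.1 hk).le] at hsplit
  rw [← card_filter]
  omega

theorem abs_sum_range_pow_sub_le {n : ℕ} (hn : 1 ≤ n) :
    ∃ C : ℝ, ∀ p : ℕ, 1 ≤ p →
      |∑ k ∈ range p, (k : ℝ) ^ n - ((p : ℝ) ^ (n + 1) / (n + 1) - (p : ℝ) ^ n / 2)|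
        ≤ C * (p : ℝ) ^ (n - 1) := by
  obtain ⟨m, rfl⟩ : ∃ m, n = m + 1 := ⟨n - 1, by omega⟩
  set c : ℕ → ℝ := fun i => bernoulli i * (m + 2).choose i / (m + 2) with hc
  refine ⟨∑ i ∈ range m, |c (i + 2)|, fun p hp => ?_⟩
  have hfaulhaber : ∑ k ∈ range p, (k : ℝ) ^ (m + 1) =
      ∑ i ∈ range (m + 2), c i * (p : ℝ) ^ (m + 2 - i) := by
    have h := congrArg (fun x : ℚ => (x : ℝ)) (sum_range_pow p (m + 1))
    push_cast at h
    rw [h]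
    refine sum_congr rfl fun i _ => ?_
    simp only [hc]
    ring
  have hc0 : c 0 = 1 / (m + 2) := by simp [hc]
  have hc1 : c 1 = -(1 / 2) := by
    simp only [hc, bernoulli_one, Nat.choose_one_right]
    push_cast
    field_simp
  have hremainder : ∑ k ∈ range p, (k : ℝ) ^ (m + 1) -
      ((p : ℝ) ^ (m + 1 + 1) / (((m + 1 : ℕ) : ℝ) + 1) - (p : ℝ) ^ (m + 1) / 2) =
      ∑ i ∈ range m, c (i + 2) * (p : ℝ) ^ (m - i) := by
    have hexp : ∀ i ∈ range m, c (i + 1 + 1) * (p : ℝ) ^ (m + 2 - (i + 1 + 1)) =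
        c (i + 2) * (p : ℝ) ^ (m - i) := fun i _ => by
      rw [show m + 2 - (i + 1 + 1) = m - i by omega]
    rw [hfaulhaber, sum_range_succ', sum_range_succ', hc0, hc1, sum_congr rfl hexp,
      show m + 2 - (0 + 1) = m + 1 by omega, Nat.sub_zero]
    push_cast
    ring
  have hp1 : (1 : ℝ) ≤ p := by exact_mod_cast hp
  rw [hremainder, Nat.add_sub_cancel, sum_mul]
  refine (abs_sum_le_sum_abs _ _).trans (sum_le_sum fun i _ => ?_)
  rw [abs_mul, abs_of_nonneg (by positivity : (0 : ℝ) ≤ (p : ℝ) ^ (m - i))]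
  exact mul_le_mul_of_nonneg_left (pow_le_pow_right₀ hp1 (Nat.sub_le m i)) (abs_nonneg _)

theorem bestPrefWelfare_eq (n p : ℕ) :
    bestPrefWelfare n p = p * ∑ k ∈ range p, (1 - ((k : ℝ) / p) ^ n) := by
  rcases p.eq_zero_or_pos with rfl | hp
  · simp [bestPrefWelfare]
  have hp' : (p : ℝ) ≠ 0 := by positivity
  have hsum : ∑ v : Fin n → Fin p, ((univ.sup fun i => (v i : ℕ) + 1 : ℕ) : ℝ) =
      (p : ℝ) ^ n * ∑ k ∈ range p, (1 - ((k : ℝ) / p) ^ n) := by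
    rw [← Nat.cast_sum, Fin.sum_sup_val_add_one, Fintype.card_fin, Nat.cast_sum, mul_sum]
    refine sum_congr rfl fun k hk => ?_
    rw [Nat.cast_sub (Nat.pow_le_pow_left (mem_range.1 hk).le n), mul_sub, mul_one, div_pow,
      mul_div_cancel₀ _ (pow_ne_zero n hp')]
    push_cast
    rfl
  have hcolumn : ∀ q : Fin p, ∑ σ : Fin n → Equiv.Perm (Fin p),
      ((univ.sup fun i => ((σ i q : Fin p) : ℕ) + 1 : ℕ) : ℝ) =
        (p.factorial : ℝ) ^ n * ∑ k ∈ range p, (1 - ((k : ℝ) / p) ^ n) := by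
    intro q
    have h := Equiv.Perm.card_pow_smul_sum_pi_apply
      (fun v : Fin n → Fin p => ((univ.sup fun i => (v i : ℕ) + 1 : ℕ) : ℝ)) fun _ => q
    simp only [hsum, nsmul_eq_mul, Fintype.card_fin] at h
    push_cast at h
    apply mul_left_cancel₀ (pow_ne_zero n hp')
    linear_combination h
  rw [bestPrefWelfare, sum_comm, sum_congr rfl fun q _ => hcolumn q, sum_const, card_univ,
    Fintype.card_fin, nsmul_eq_mul]
  field_simp

/-- For fixed `n ≥ 1`, `W(p) = np²/(n+1) + p/2 + O(1)`:
there is a constant `C` (depending only on `n`) with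
`|W(p) − np²/(n+1) − p/2| ≤ C` for all `p ≥ 1`. -/
theorem stmt5 (n : ℕ) (hn : 1 ≤ n) :
    ∃ C : ℝ, ∀ p : ℕ, 1 ≤ p →
      |bestPrefWelfare n p - (n : ℝ) * (p : ℝ) ^ 2 / ((n : ℝ) + 1) - (p : ℝ) / 2| ≤ C := by
  obtain ⟨C, hC⟩ := abs_sum_range_pow_sub_le hn
  refine ⟨C, fun p hp => ?_⟩
  have hpos : (0 : ℝ) < (p : ℝ) ^ (n - 1) := by positivity
  have hpow : (p : ℝ) ^ n = p * (p : ℝ) ^ (n - 1) := by rw [← pow_succ', Nat.sub_add_cancel hn]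
  have herror : bestPrefWelfare n p - (n : ℝ) * (p : ℝ) ^ 2 / ((n : ℝ) + 1) - (p : ℝ) / 2 =
      -(∑ k ∈ range p, (k : ℝ) ^ n - ((p : ℝ) ^ (n + 1) / (n + 1) - (p : ℝ) ^ n / 2)) /
        (p : ℝ) ^ (n - 1) := by
    simp_rw [bestPrefWelfare_eq, sum_sub_distrib, sum_const, card_range, nsmul_one, div_pow,
      ← sum_div, pow_succ, hpow]
    field_simp
    ring
  rw [herror, abs_div, abs_neg, abs_of_pos hpos, div_le_iff₀ hpos]
  exact hC p hp
end

section
/- For all k ≥ 1, m ≥ 0, and (x,y) ∈ ℝ², if (x',y') = G_{km}(x,y) then x' = x + Σ_{j=1}^m δ_{k+j} and y' = (k+m+1)·( y/(k+1) − Σ_{j=1}^m δ_{k+j}/(k+j) ). Moreover, for all k ≥ 1, m ≥ 1, and (x,y) ∈ ℝ², if (x'',y'') = F_{km}(x,y) then x'' = y + Σ_{j=2}^m δ_{k+j} and y'' = (k+m+1)·( x/(k+1) − Σ_{j=2}^m δ_{k+j}/(k+j) ). -/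
open Finset

/-- The sequence `γ` with `γ₁ = γ₂ = 1` and `γ_k = ∏_{j=1}^{⌊(k−1)/2⌋} (2j+1)/(2j)`
for `k ≥ 3` (the empty product is `1`, so the formula is also valid for `k = 1, 2`). -/
noncomputable def gammaSeq (k : ℕ) : ℝ :=
  ∏ j ∈ Finset.Icc 1 ((k - 1) / 2), (2 * (j : ℝ) + 1) / (2 * (j : ℝ))

/-- `γ̄_k = γ_k / k`. -/
noncomputable def gammaBar (k : ℕ) : ℝ := gammaSeq k / k

/-- `δ_k = (1/3)(k + (−1)^k γ_k)`. -/
noncomputable def deltaSeq (k : ℕ) : ℝ := (1 / 3) * ((k : ℝ) + (-1) ^ k * gammaSeq k)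

/-- `f_k(x,y) = (y, ((k+2)/(k+1))·x)`. -/
noncomputable def fmap (k : ℕ) : ℝ × ℝ → ℝ × ℝ :=
  fun xy => (xy.2, ((k : ℝ) + 2) / ((k : ℝ) + 1) * xy.1)

/-- `g_k(x,y) = (x + δ_{k+1}, ((k+2)/(k+1))·(y − δ_{k+1}))`. -/
noncomputable def gmap (k : ℕ) : ℝ × ℝ → ℝ × ℝ :=
  fun xy => (xy.1 + deltaSeq (k + 1), ((k : ℝ) + 2) / ((k : ℝ) + 1) * (xy.2 - deltaSeq (k + 1)))

/-- `G_{k0} = id` and `G_{km} = g_{k+m−1} ∘ g_{k+m−2} ∘ ⋯ ∘ g_k` for `m ≥ 1`. -/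
noncomputable def Gmap (k : ℕ) : ℕ → (ℝ × ℝ → ℝ × ℝ)
  | 0 => id
  | m + 1 => gmap (k + m) ∘ Gmap k m

/-- `F_{km} = G_{k+1,m−1} ∘ f_k` (for `m ≥ 1`). -/
noncomputable def Fmap (k m : ℕ) : ℝ × ℝ → ℝ × ℝ := Gmap (k + 1) (m - 1) ∘ fmap k

/-- The sets `A_k ⊆ ℝ²`: `A₁ = {(0,0)}` and `A_{k+1} = f_k(A_k) ∪ g_k(A_k)` for
`k ≥ 1` (the value at `0` is junk). -/
noncomputable def Aset : ℕ → Set (ℝ × ℝ)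
  | 0 => ∅
  | 1 => {(0, 0)}
  | k + 2 => fmap (k + 1) '' Aset (k + 1) ∪ gmap (k + 1) '' Aset (k + 1)

/-- Each `g_{k+m}` adds `δ_{k+m+1}` to `x` and multiplies `y` by `(k+m+2)/(k+m+1)`, so `x`
and `y/(k+m+1)` both evolve by partial sums of `δ`; `F_{km}` runs the same recursion from
`f_k(x,y)`, with sums starting at `s = 2` instead of `s = 1`. -/
def HasClosedForm (k s m : ℕ) (a b : ℝ) (p : ℝ × ℝ) : Prop :=
  p.1 = a + ∑ j ∈ Icc s m, deltaSeq (k + j) ∧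
  p.2 = ((k : ℝ) + m + 1) *
    (b / ((k : ℝ) + 1) - ∑ j ∈ Icc s m, deltaSeq (k + j) / ((k : ℝ) + j))

theorem HasClosedForm.succ {k s m : ℕ} {a b : ℝ} {p : ℝ × ℝ} (hs : s ≤ m + 1)
    (hp : HasClosedForm k s m a b p) : HasClosedForm k s (m + 1) a b (gmap (k + m) p) := by
  obtain ⟨h1, h2⟩ := hp
  have : (k : ℝ) + m + 1 ≠ 0 := by positivity
  rw [HasClosedForm, sum_Icc_succ_top hs, sum_Icc_succ_top hs, ← add_assoc k m 1]
  refine ⟨by simp only [gmap, h1]; ring, ?_⟩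
  simp only [gmap, h2]
  push_cast
  field_simp
  ring

theorem Gmap_hasClosedForm (k : ℕ) (x y : ℝ) (m : ℕ) :
    HasClosedForm k 1 m x y (Gmap k m (x, y)) := by
  induction m with
  | zero =>
    have : (k : ℝ) + 1 ≠ 0 := by positivity
    simp [HasClosedForm, Gmap, mul_div_cancel₀ y this]
  | succ m ih => exact ih.succ (by omega)

theorem Fmap_succ {k m : ℕ} (hm : 1 ≤ m) : Fmap k (m + 1) = gmap (k + m) ∘ Fmap k m := by
  obtain ⟨n, rfl⟩ := Nat.exists_eq_add_of_le' hm
  simp only [Fmap, Nat.add_sub_cancel, Gmap]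
  rw [add_right_comm k 1 n]
  rfl

theorem Fmap_hasClosedForm (k : ℕ) (x y : ℝ) {m : ℕ} (hm : 1 ≤ m) :
    HasClosedForm k 2 m y x (Fmap k m (x, y)) := by
  induction m, hm using Nat.le_induction with
  | base =>
    have hF : Fmap k 1 (x, y) = (y, ((k : ℝ) + 2) / ((k : ℝ) + 1) * x) := rfl
    rw [HasClosedForm, hF, Icc_eq_empty_of_lt one_lt_two, sum_empty, sum_empty, Nat.cast_one]
    constructor <;> ring
  | succ m hm ih =>
    rw [Fmap_succ hm]
    exact ih.succ (by omega)

theorem stmt11_general (k : ℕ) (x y : ℝ) :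
    (∀ m : ℕ,
      (Gmap k m (x, y)).1 = x + ∑ j ∈ Finset.Icc 1 m, deltaSeq (k + j) ∧
      (Gmap k m (x, y)).2
        = ((k : ℝ) + m + 1)
            * (y / ((k : ℝ) + 1) - ∑ j ∈ Finset.Icc 1 m, deltaSeq (k + j) / ((k : ℝ) + j))) ∧
    (∀ m : ℕ, 1 ≤ m →
      (Fmap k m (x, y)).1 = y + ∑ j ∈ Finset.Icc 2 m, deltaSeq (k + j) ∧
      (Fmap k m (x, y)).2
        = ((k : ℝ) + m + 1)
            * (x / ((k : ℝ) + 1) - ∑ j ∈ Finset.Icc 2 m, deltaSeq (k + j) / ((k : ℝ) + j))) := by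
  exact ⟨Gmap_hasClosedForm k x y, fun _ hm => Fmap_hasClosedForm k x y hm⟩

/-- Explicit form of `G_{km}` and `F_{km}`: for `k ≥ 1`, `m ≥ 0`
and `(x,y) ∈ ℝ²`, if `(x',y') = G_{km}(x,y)` then `x' = x + Σ_{j=1}^m δ_{k+j}` and
`y' = (k+m+1)·(y/(k+1) − Σ_{j=1}^m δ_{k+j}/(k+j))`; and for `m ≥ 1`, if
`(x'',y'') = F_{km}(x,y)` then `x'' = y + Σ_{j=2}^m δ_{k+j}` and
`y'' = (k+m+1)·(x/(k+1) − Σ_{j=2}^m δ_{k+j}/(k+j))`. -/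
theorem stmt11 (k : ℕ) (hk : 1 ≤ k) (x y : ℝ) :
    (∀ m : ℕ,
      (Gmap k m (x, y)).1 = x + ∑ j ∈ Finset.Icc 1 m, deltaSeq (k + j) ∧
      (Gmap k m (x, y)).2
        = ((k : ℝ) + m + 1)
            * (y / ((k : ℝ) + 1) - ∑ j ∈ Finset.Icc 1 m, deltaSeq (k + j) / ((k : ℝ) + j))) ∧
    (∀ m : ℕ, 1 ≤ m →
      (Fmap k m (x, y)).1 = y + ∑ j ∈ Finset.Icc 2 m, deltaSeq (k + j) ∧
      (Fmap k m (x, y)).2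
        = ((k : ℝ) + m + 1)
            * (x / ((k : ℝ) + 1) - ∑ j ∈ Finset.Icc 2 m, deltaSeq (k + j) / ((k : ℝ) + j))) :=
  stmt11_general k x y
end

section
/- Let k ≥ 1, m ≥ 0, (x,y) ∈ ℝ², and (x',y') = G_{km}(x,y). If k is odd, then x' + y' = x + y + (m/(k+1))·y − m(m+1)/6 − (1/3)·Σ_{j=1}^{⌊(m+1)/2⌋} γ̄_{k+2j−1}. If k is even, then x' + y' = x + y + (m/(k+1))·y − m(m+1)/6 + (m/3)·γ̄_{k+1} − (1/3)·Σ_{j=1}^{⌊m/2⌋} γ̄_{k+2j}. -/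
open Finset

/- Write `(x_m, y_m) = G_{km}(x, y)`. The step `g_{k+m}` adds `(y_m - δ_{k+m+1}) / (k+m+1)` to the
coordinate sum, and this quotient is also `y_{m+1} / (k+m+2)`. Since `δ_n / n = (1 + (-1)^n γ̄_n) / 3`,
everything reduces to the alternating partial sums `Σ_{i=1}^{m} (-1)^{k+i} γ̄_{k+i}`, which collapse
in pairs because `γ̄_{2s+1} = γ̄_{2s}` for `s ≥ 1`. -/

lemma gammaBar_two_mul_add_one {s : ℕ} (hs : s ≠ 0) :
    gammaBar (2 * s + 1) = gammaBar (2 * s) := by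
  obtain ⟨t, rfl⟩ := Nat.exists_eq_succ_of_ne_zero hs
  have hodd : gammaSeq (2 * t + 3) = gammaSeq (2 * t + 2) * ((2 * t + 3) / (2 * t + 2)) := by
    unfold gammaSeq
    rw [show (2 * t + 3 - 1) / 2 = t + 1 by omega, show (2 * t + 2 - 1) / 2 = t by omega,
      prod_Icc_succ_top (by omega)]
    push_cast
    ring
  rw [show 2 * (t + 1) = 2 * t + 2 by ring]
  unfold gammaBar
  rw [hodd]
  push_cast
  field_simp
  ring

noncomputable def altGammaBarSum (k m : ℕ) : ℝ :=
  ∑ i ∈ range m, (-1) ^ (k + i + 1) * gammaBar (k + i + 1)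

lemma altGammaBarSum_succ (k m : ℕ) :
    altGammaBarSum k (m + 1) = altGammaBarSum k m + (-1) ^ (k + m + 1) * gammaBar (k + m + 1) :=
  sum_range_succ _ _

lemma altGammaBarSum_add_two {k m : ℕ} (h : Odd (k + m)) :
    altGammaBarSum k (m + 2) = altGammaBarSum k m := by
  obtain ⟨s, hs⟩ := h
  have hpair : gammaBar (k + m + 2) = gammaBar (k + m + 1) := by
    rw [show k + m + 2 = 2 * (s + 1) + 1 by omega, show k + m + 1 = 2 * (s + 1) by omega]
    exact gammaBar_two_mul_add_one (by omega)
  rw [altGammaBarSum_succ, altGammaBarSum_succ, show k + (m + 1) + 1 = k + m + 2 by omega, hpair,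
    show k + m + 2 = 2 * (s + 1) + 1 by omega, show k + m + 1 = 2 * (s + 1) by omega, pow_succ,
    pow_mul]
  norm_num

lemma altGammaBarSum_two_mul_of_odd {k : ℕ} (hk : Odd k) (s : ℕ) :
    altGammaBarSum k (2 * s) = 0 := by
  induction s with
  | zero => simp [altGammaBarSum]
  | succ s ih => rwa [mul_add_one, altGammaBarSum_add_two (hk.add_even (even_two_mul s))]

lemma altGammaBarSum_two_mul_add_one_of_odd {k : ℕ} (hk : Odd k) (s : ℕ) :
    altGammaBarSum k (2 * s + 1) = gammaBar (k + 2 * s + 1) := by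
  rw [altGammaBarSum_succ, altGammaBarSum_two_mul_of_odd hk,
    (hk.add_even (even_two_mul s)).add_one.neg_one_pow]
  ring

lemma altGammaBarSum_two_mul_add_one_of_even {k : ℕ} (hk : Even k) (s : ℕ) :
    altGammaBarSum k (2 * s + 1) = -gammaBar (k + 1) := by
  induction s with
  | zero => simp [altGammaBarSum, hk.add_one.neg_one_pow]
  | succ s ih =>
    rwa [show 2 * (s + 1) + 1 = 2 * s + 1 + 2 by ring,
      altGammaBarSum_add_two (by rw [← add_assoc]; exact (hk.add (even_two_mul s)).add_one)]

lemma altGammaBarSum_two_mul_add_two_of_even {k : ℕ} (hk : Even k) (s : ℕ) :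
    altGammaBarSum k (2 * s + 2) = -gammaBar (k + 1) + gammaBar (k + 2 * s + 2) := by
  rw [altGammaBarSum_succ, altGammaBarSum_two_mul_add_one_of_even hk,
    Even.neg_one_pow (by rw [← add_assoc]; exact (hk.add (even_two_mul s)).add_one.add_one),
    one_mul]
  rfl

lemma snd_gmap (n : ℕ) (p : ℝ × ℝ) :
    (gmap n p).2 = ((n : ℝ) + 2) * (p.2 / (n + 1) - deltaSeq (n + 1) / (n + 1)) := by
  simp only [gmap]
  field_simp

lemma fst_add_snd_gmap (n : ℕ) (p : ℝ × ℝ) :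
    (gmap n p).1 + (gmap n p).2 = p.1 + p.2 + (p.2 / (n + 1) - deltaSeq (n + 1) / (n + 1)) := by
  simp only [gmap]
  field_simp
  ring

lemma deltaSeq_div_succ (n : ℕ) :
    deltaSeq (n + 1) / ((n : ℝ) + 1) = 1 / 3 + (-1) ^ (n + 1) * gammaBar (n + 1) / 3 := by
  unfold deltaSeq gammaBar
  push_cast
  field_simp

lemma snd_Gmap (k m : ℕ) (x y : ℝ) :
    (Gmap k m (x, y)).2 = ((k : ℝ) + m + 1) * (y / (k + 1) - (m + altGammaBarSum k m) / 3) := by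
  induction m with
  | zero =>
    simp only [Gmap, id_eq, CharP.cast_eq_zero, add_zero, altGammaBarSum, range_zero, sum_empty,
      zero_div, sub_zero]
    field_simp
  | succ m ih =>
    rw [Gmap, Function.comp_apply, snd_gmap, ih, deltaSeq_div_succ, altGammaBarSum_succ]
    push_cast
    field_simp
    ring

lemma fst_add_snd_Gmap (k m : ℕ) (x y : ℝ) :
    (Gmap k m (x, y)).1 + (Gmap k m (x, y)).2
      = x + y + m * y / (k + 1) - m * (m + 1) / 6
          - (1 / 3) * ∑ j ∈ range m, altGammaBarSum k (j + 1) := by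
  induction m with
  | zero => simp [Gmap]
  | succ m ih =>
    rw [Gmap, Function.comp_apply, fst_add_snd_gmap, ih, snd_Gmap, deltaSeq_div_succ,
      sum_range_succ, altGammaBarSum_succ]
    push_cast
    field_simp
    ring

lemma sum_altGammaBarSum_two_mul_of_odd {k : ℕ} (hk : Odd k) (s : ℕ) :
    ∑ j ∈ range (2 * s), altGammaBarSum k (j + 1)
      = ∑ j ∈ Icc 1 s, gammaBar (k + 2 * j - 1) := by
  induction s with
  | zero => simp
  | succ s ih =>
    rw [show 2 * (s + 1) = 2 * s + 1 + 1 by ring, sum_range_succ, sum_range_succ, ih,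
      sum_Icc_succ_top (by omega), altGammaBarSum_two_mul_add_one_of_odd hk,
      show 2 * s + 1 + 1 = 2 * (s + 1) by ring, altGammaBarSum_two_mul_of_odd hk,
      show k + 2 * (s + 1) - 1 = k + 2 * s + 1 by omega, add_zero]

lemma sum_altGammaBarSum_of_odd {k : ℕ} (hk : Odd k) (m : ℕ) :
    ∑ j ∈ range m, altGammaBarSum k (j + 1)
      = ∑ j ∈ Icc 1 ((m + 1) / 2), gammaBar (k + 2 * j - 1) := by
  obtain ⟨s, rfl | rfl⟩ := Nat.even_or_odd' m
  · rw [sum_altGammaBarSum_two_mul_of_odd hk, show (2 * s + 1) / 2 = s by omega]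
  · rw [sum_range_succ, sum_altGammaBarSum_two_mul_of_odd hk,
      altGammaBarSum_two_mul_add_one_of_odd hk, show (2 * s + 1 + 1) / 2 = s + 1 by omega,
      sum_Icc_succ_top (by omega), show k + 2 * (s + 1) - 1 = k + 2 * s + 1 by omega]

lemma sum_altGammaBarSum_two_mul_of_even {k : ℕ} (hk : Even k) (s : ℕ) :
    ∑ j ∈ range (2 * s), altGammaBarSum k (j + 1)
      = -(2 * s) * gammaBar (k + 1) + ∑ j ∈ Icc 1 s, gammaBar (k + 2 * j) := by
  induction s with
  | zero => simp
  | succ s ih =>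
    rw [show 2 * (s + 1) = 2 * s + 1 + 1 by ring, sum_range_succ, sum_range_succ, ih,
      sum_Icc_succ_top (by omega), altGammaBarSum_two_mul_add_one_of_even hk,
      altGammaBarSum_two_mul_add_two_of_even hk, show k + 2 * (s + 1) = k + 2 * s + 2 by ring]
    push_cast
    ring

lemma sum_altGammaBarSum_of_even {k : ℕ} (hk : Even k) (m : ℕ) :
    ∑ j ∈ range m, altGammaBarSum k (j + 1)
      = -m * gammaBar (k + 1) + ∑ j ∈ Icc 1 (m / 2), gammaBar (k + 2 * j) := by
  obtain ⟨s, rfl | rfl⟩ := Nat.even_or_odd' m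
  · rw [sum_altGammaBarSum_two_mul_of_even hk, show 2 * s / 2 = s by omega]
    push_cast
    ring
  · rw [sum_range_succ, sum_altGammaBarSum_two_mul_of_even hk,
      altGammaBarSum_two_mul_add_one_of_even hk, show (2 * s + 1) / 2 = s by omega]
    push_cast
    ring

theorem stmt12_general (k : ℕ) (m : ℕ) (x y : ℝ) :
    (Odd k →
      (Gmap k m (x, y)).1 + (Gmap k m (x, y)).2
        = x + y + (m : ℝ) / ((k : ℝ) + 1) * y - (m : ℝ) * ((m : ℝ) + 1) / 6
            - (1 / 3) * ∑ j ∈ Finset.Icc 1 ((m + 1) / 2), gammaBar (k + 2 * j - 1)) ∧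
    (Even k →
      (Gmap k m (x, y)).1 + (Gmap k m (x, y)).2
        = x + y + (m : ℝ) / ((k : ℝ) + 1) * y - (m : ℝ) * ((m : ℝ) + 1) / 6
            + (m : ℝ) / 3 * gammaBar (k + 1)
            - (1 / 3) * ∑ j ∈ Finset.Icc 1 (m / 2), gammaBar (k + 2 * j)) := by
  refine ⟨fun hk => ?_, fun hk => ?_⟩
  · rw [fst_add_snd_Gmap, sum_altGammaBarSum_of_odd hk]
    ring
  · rw [fst_add_snd_Gmap, sum_altGammaBarSum_of_even hk]
    ring

/-- Effect of `G_{km}` on the coordinate sum: for `k ≥ 1`, `m ≥ 0`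
and `(x',y') = G_{km}(x,y)`: if `k` is odd then
`x' + y' = x + y + (m/(k+1))·y − m(m+1)/6 − (1/3)·Σ_{j=1}^{⌊(m+1)/2⌋} γ̄_{k+2j−1}`,
and if `k` is even then
`x' + y' = x + y + (m/(k+1))·y − m(m+1)/6 + (m/3)·γ̄_{k+1} − (1/3)·Σ_{j=1}^{⌊m/2⌋} γ̄_{k+2j}`. -/
theorem stmt12 (k : ℕ) (hk : 1 ≤ k) (m : ℕ) (x y : ℝ) :
    (Odd k →
      (Gmap k m (x, y)).1 + (Gmap k m (x, y)).2
        = x + y + (m : ℝ) / ((k : ℝ) + 1) * y - (m : ℝ) * ((m : ℝ) + 1) / 6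
            - (1 / 3) * ∑ j ∈ Finset.Icc 1 ((m + 1) / 2), gammaBar (k + 2 * j - 1)) ∧
    (Even k →
      (Gmap k m (x, y)).1 + (Gmap k m (x, y)).2
        = x + y + (m : ℝ) / ((k : ℝ) + 1) * y - (m : ℝ) * ((m : ℝ) + 1) / 6
            + (m : ℝ) / 3 * gammaBar (k + 1)
            - (1 / 3) * ∑ j ∈ Finset.Icc 1 (m / 2), gammaBar (k + 2 * j)) :=
  stmt12_general k m x y
end

section
/- Let k ≥ 1, m ≥ 1, (x,y) ∈ ℝ², and (x',y') = F_{km}(x,y). If k is odd, then x' + y' = x + y + (m/(k+1))·x − (m−1)m/6 + ((m−1)/3)·γ̄_{k+2} − (1/3)·Σ_{j=1}^{⌊(m−1)/2⌋} γ̄_{k+2j+1}. If k is even, then x' + y' = x + y + (m/(k+1))·x − (m−1)m/6 − (1/3)·Σ_{j=1}^{⌊m/2⌋} γ̄_{k+2j}. -/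
open Finset

/-! Write `(aₙ, bₙ) = F_{k,n+1}(x, y)`. Each `g_j` lowers `b/(j+1)` by `δ_{j+1}/(j+1)` and
raises `a + b` by the new value of `b/(j+2)`, so `aₙ + bₙ - x - y` is a sum of partial sums
of `δ_j / j = 1/3 + (-1)^j γ̄_j / 3`. Since `γ̄_{2t+1} = γ̄_{2t}`, the alternating sequence
`(-1)^j γ̄_j` telescopes against the even-indexed part of `γ̄`, which leaves the sums over every
second index. -/

lemma gammaBar_succ_of_even {n : ℕ} (hn : Even n) (hn0 : n ≠ 0) :
    gammaBar (n + 1) = gammaBar n := by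
  obtain ⟨s, rfl⟩ : ∃ s, n = 2 * s + 2 := ⟨n / 2 - 1, by rcases hn with ⟨t, rfl⟩; omega⟩
  have hsucc :
      gammaSeq (2 * s + 2 + 1) = gammaSeq (2 * s + 2) * ((2 * s + 3) / (2 * s + 2)) := by
    rw [gammaSeq, gammaSeq, show (2 * s + 2 + 1 - 1) / 2 = s + 1 by omega,
      show (2 * s + 2 - 1) / 2 = s by omega, prod_Icc_succ_top (by omega)]
    push_cast
    ring_nf
  rw [gammaBar, gammaBar, hsucc]
  push_cast
  field_simp
  ring

noncomputable def gammaBarEven (n : ℕ) : ℝ := if Even n then gammaBar n else 0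

lemma gammaBarEven_of_even {n : ℕ} (hn : Even n) : gammaBarEven n = gammaBar n :=
  if_pos hn

lemma gammaBarEven_of_odd {n : ℕ} (hn : Odd n) : gammaBarEven n = 0 :=
  if_neg (Nat.not_even_iff_odd.mpr hn)

lemma neg_one_pow_mul_gammaBar_succ {n : ℕ} (hn : n ≠ 0) :
    (-1) ^ (n + 1) * gammaBar (n + 1) = gammaBarEven (n + 1) - gammaBarEven n := by
  rcases Nat.even_or_odd n with he | ho
  · rw [gammaBarEven_of_odd he.add_one, gammaBarEven_of_even he, gammaBar_succ_of_even he hn,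
      he.add_one.neg_one_pow]
    ring
  · rw [gammaBarEven_of_even ho.add_one, gammaBarEven_of_odd ho, ho.add_one.neg_one_pow]
    ring

lemma deltaSeq_succ_div {n : ℕ} (hn : n ≠ 0) :
    deltaSeq (n + 1) / ((n : ℝ) + 1)
      = 1 / 3 + 1 / 3 * (gammaBarEven (n + 1) - gammaBarEven n) := by
  rw [← neg_one_pow_mul_gammaBar_succ hn, deltaSeq, gammaBar]
  push_cast
  field_simp

lemma gmap_snd_div (j : ℕ) (p : ℝ × ℝ) :
    (gmap j p).2 / ((j : ℝ) + 2) = p.2 / ((j : ℝ) + 1) - deltaSeq (j + 1) / ((j : ℝ) + 1) := by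
  simp only [gmap]
  field_simp

lemma gmap_fst_add_snd (j : ℕ) (p : ℝ × ℝ) :
    (gmap j p).1 + (gmap j p).2 = p.1 + p.2 + (gmap j p).2 / ((j : ℝ) + 2) := by
  simp only [gmap]
  field_simp
  ring

lemma Fmap_one (k : ℕ) (p : ℝ × ℝ) : Fmap k 1 p = fmap k p := rfl

lemma Fmap_succ_succ (k n : ℕ) (p : ℝ × ℝ) :
    Fmap k (n + 2) p = gmap (k + 1 + n) (Fmap k (n + 1) p) := rfl

lemma Fmap_snd_div (k n : ℕ) (x y : ℝ) :
    (Fmap k (n + 1) (x, y)).2 / ((k : ℝ) + n + 2)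
      = x / ((k : ℝ) + 1) - n / 3
          - 1 / 3 * (gammaBarEven (k + n + 1) - gammaBarEven (k + 1)) := by
  induction n with
  | zero =>
    simp only [zero_add, Fmap_one, fmap, Nat.cast_zero, add_zero, sub_self, mul_zero, sub_zero]
    field_simp
    ring
  | succ n ih =>
    have h := gmap_snd_div (k + 1 + n) (Fmap k (n + 1) (x, y))
    rw [deltaSeq_succ_div (by omega)] at h
    rw [show k + n + 1 = k + 1 + n by omega] at ih
    rw [Fmap_succ_succ, show k + (n + 1) + 1 = k + 1 + n + 1 by omega]
    push_cast at h ih ⊢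
    rw [show (k : ℝ) + (n + 1) + 2 = k + 1 + n + 2 by ring, h,
      show (k : ℝ) + 1 + n + 1 = k + n + 2 by ring, ih]
    ring

lemma Fmap_fst_add_snd (k n : ℕ) (x y : ℝ) :
    (Fmap k (n + 1) (x, y)).1 + (Fmap k (n + 1) (x, y)).2
      = x + y + (n + 1) / ((k : ℝ) + 1) * x - n * (n + 1) / 6
          - 1 / 3 * (∑ i ∈ range (n + 1), gammaBarEven (k + 1 + i)
            - (n + 1) * gammaBarEven (k + 1)) := by
  induction n with
  | zero =>
    simp only [zero_add, Fmap_one, fmap, sum_range_one, add_zero, Nat.cast_zero, one_mul,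
      sub_self, mul_zero, zero_mul, zero_div, sub_zero]
    field_simp
    ring
  | succ n ih =>
    rw [Fmap_succ_succ, gmap_fst_add_snd, ← Fmap_succ_succ, ih, sum_range_succ _ (n + 1)]
    have h := Fmap_snd_div k (n + 1) x y
    push_cast at h ⊢
    rw [show (k : ℝ) + 1 + n + 2 = k + (n + 1) + 2 by ring, h,
      show k + (n + 1) + 1 = k + 1 + (n + 1) by omega]
    ring

lemma sum_range_gammaBarEven_of_odd {k : ℕ} (hk : Odd k) (n : ℕ) :
    ∑ i ∈ range (n + 1), gammaBarEven (k + 1 + i)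
      = gammaBar (k + 1) + ∑ j ∈ Icc 1 (n / 2), gammaBar (k + 2 * j + 1) := by
  induction n with
  | zero => simp [gammaBarEven_of_even hk.add_one]
  | succ n ih =>
    rw [sum_range_succ, ih]
    obtain ⟨a, rfl⟩ := hk
    rcases Nat.even_or_odd' n with ⟨t, rfl | rfl⟩
    · rw [gammaBarEven_of_odd ⟨a + t + 1, by ring⟩, show (2 * t + 1) / 2 = 2 * t / 2 by omega]
      ring
    · rw [gammaBarEven_of_even ⟨a + t + 2, by ring⟩,
        show (2 * t + 1 + 1) / 2 = (2 * t + 1) / 2 + 1 by omega, sum_Icc_succ_top (by omega),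
        show 2 * a + 1 + 2 * ((2 * t + 1) / 2 + 1) + 1 = 2 * a + 1 + 1 + (2 * t + 1 + 1) by omega]
      ring

lemma sum_range_gammaBarEven_of_even {k : ℕ} (hk : Even k) (n : ℕ) :
    ∑ i ∈ range (n + 1), gammaBarEven (k + 1 + i)
      = ∑ j ∈ Icc 1 ((n + 1) / 2), gammaBar (k + 2 * j) := by
  induction n with
  | zero => simp [gammaBarEven_of_odd hk.add_one]
  | succ n ih =>
    rw [sum_range_succ, ih]
    obtain ⟨a, rfl⟩ := hk
    rcases Nat.even_or_odd' n with ⟨t, rfl | rfl⟩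
    · rw [gammaBarEven_of_even ⟨a + t + 1, by ring⟩,
        show (2 * t + 1 + 1) / 2 = (2 * t + 1) / 2 + 1 by omega, sum_Icc_succ_top (by omega),
        show a + a + 2 * ((2 * t + 1) / 2 + 1) = a + a + 1 + (2 * t + 1) by omega]
    · rw [gammaBarEven_of_odd ⟨a + t + 1, by ring⟩,
        show (2 * t + 1 + 1 + 1) / 2 = (2 * t + 1 + 1) / 2 by omega]
      ring

theorem stmt13_general (k : ℕ) (m : ℕ) (hm : 1 ≤ m) (x y : ℝ) :
    (Odd k →
      (Fmap k m (x, y)).1 + (Fmap k m (x, y)).2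
        = x + y + (m : ℝ) / ((k : ℝ) + 1) * x - ((m : ℝ) - 1) * (m : ℝ) / 6
            + ((m : ℝ) - 1) / 3 * gammaBar (k + 2)
            - (1 / 3) * ∑ j ∈ Finset.Icc 1 ((m - 1) / 2), gammaBar (k + 2 * j + 1)) ∧
    (Even k →
      (Fmap k m (x, y)).1 + (Fmap k m (x, y)).2
        = x + y + (m : ℝ) / ((k : ℝ) + 1) * x - ((m : ℝ) - 1) * (m : ℝ) / 6
            - (1 / 3) * ∑ j ∈ Finset.Icc 1 (m / 2), gammaBar (k + 2 * j)) := by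
  obtain ⟨n, rfl⟩ : ∃ n, m = n + 1 := ⟨m - 1, by omega⟩
  rw [Fmap_fst_add_snd, Nat.add_sub_cancel]
  push_cast
  refine ⟨fun hk => ?_, fun hk => ?_⟩
  · rw [sum_range_gammaBarEven_of_odd hk, gammaBarEven_of_even hk.add_one,
      ← gammaBar_succ_of_even hk.add_one (by omega)]
    ring
  · rw [sum_range_gammaBarEven_of_even hk, gammaBarEven_of_odd hk.add_one]
    ring

/-- Effect of `F_{km}` on the coordinate sum: for `k ≥ 1`, `m ≥ 1`
and `(x',y') = F_{km}(x,y)`: if `k` is odd then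
`x' + y' = x + y + (m/(k+1))·x − (m−1)m/6 + ((m−1)/3)·γ̄_{k+2} − (1/3)·Σ_{j=1}^{⌊(m−1)/2⌋} γ̄_{k+2j+1}`,
and if `k` is even then
`x' + y' = x + y + (m/(k+1))·x − (m−1)m/6 − (1/3)·Σ_{j=1}^{⌊m/2⌋} γ̄_{k+2j}`. -/
theorem stmt13 (k : ℕ) (hk : 1 ≤ k) (m : ℕ) (hm : 1 ≤ m) (x y : ℝ) :
    (Odd k →
      (Fmap k m (x, y)).1 + (Fmap k m (x, y)).2
        = x + y + (m : ℝ) / ((k : ℝ) + 1) * x - ((m : ℝ) - 1) * (m : ℝ) / 6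
            + ((m : ℝ) - 1) / 3 * gammaBar (k + 2)
            - (1 / 3) * ∑ j ∈ Finset.Icc 1 ((m - 1) / 2), gammaBar (k + 2 * j + 1)) ∧
    (Even k →
      (Fmap k m (x, y)).1 + (Fmap k m (x, y)).2
        = x + y + (m : ℝ) / ((k : ℝ) + 1) * x - ((m : ℝ) - 1) * (m : ℝ) / 6
            - (1 / 3) * ∑ j ∈ Finset.Icc 1 (m / 2), gammaBar (k + 2 * j)) :=
  stmt13_general k m hm x y
end

section
/- For all integers k ≥ 2 and m ≥ 0: γ̄_k − γ̄_{k+2⌊(m+1)/2⌋} ≤ m(m+1)/(2k) and γ̄_{k+1} − γ̄_{k+2⌊m/2⌋+1} ≤ m²/(2k). -/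
open Finset

/-! Along steps of two, `γ` never decreases and stays below `(n + 1) / 2`, so one step
`n ↦ n + 2` lowers `γ̄` by at most `γ_n (1/n − 1/(n+2)) ≤ 1/n`. Telescoping,
`γ̄_k − γ̄_{k+2s} ≤ s/k`, and `s/k` is below both bounds. -/

noncomputable def wallisRatio (t : ℕ) : ℝ :=
  ∏ j ∈ Icc 1 t, (2 * (j : ℝ) + 1) / (2 * (j : ℝ))

namespace wallisRatio

lemma succ (t : ℕ) :
    wallisRatio (t + 1) = wallisRatio t * ((2 * ((t : ℝ) + 1) + 1) / (2 * ((t : ℝ) + 1))) := by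
  rw [wallisRatio, prod_Icc_succ_top (by omega), Nat.cast_succ, ← wallisRatio]

lemma pos (t : ℕ) : 0 < wallisRatio t :=
  prod_pos fun j hj => by
    have hj : (1 : ℝ) ≤ j := by exact_mod_cast (mem_Icc.mp hj).1
    exact div_pos (by linarith) (by linarith)

lemma monotone : Monotone wallisRatio := by
  refine monotone_nat_of_le_succ fun t => ?_
  rw [succ]
  refine le_mul_of_one_le_right (pos t).le ?_
  rw [one_le_div (by positivity)]
  linarith

/-- Each factor `(2j+1)/(2j)` is at most `(j+1)/j`, and the latter product telescopes. -/
lemma le_add_one (t : ℕ) : wallisRatio t ≤ t + 1 := by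
  induction t with
  | zero => simp [wallisRatio]
  | succ t ih =>
    have hfactor :
        (2 * ((t : ℝ) + 1) + 1) / (2 * ((t : ℝ) + 1)) ≤ ((t : ℝ) + 2) / ((t : ℝ) + 1) := by
      rw [div_le_div_iff₀ (by positivity) (by positivity)]
      nlinarith
    calc wallisRatio (t + 1)
        ≤ ((t : ℝ) + 1) * (((t : ℝ) + 2) / ((t : ℝ) + 1)) := by
          rw [succ]
          exact mul_le_mul ih hfactor (by positivity) (by positivity)
      _ = ((t + 1 : ℕ) : ℝ) + 1 := by
          push_cast
          field_simp
          ring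

end wallisRatio

lemma gammaSeq_eq_wallisRatio (k : ℕ) : gammaSeq k = wallisRatio ((k - 1) / 2) := rfl

lemma gammaSeq_le_gammaSeq_add_two (k : ℕ) : gammaSeq k ≤ gammaSeq (k + 2) :=
  wallisRatio.monotone (by omega)

lemma gammaSeq_le {k : ℕ} (hk : 1 ≤ k) : gammaSeq k ≤ ((k : ℝ) + 1) / 2 := by
  have hhalf : 2 * (((k - 1) / 2 : ℕ) : ℝ) + 1 ≤ k := by
    exact_mod_cast (by omega : 2 * ((k - 1) / 2) + 1 ≤ k)
  rw [gammaSeq_eq_wallisRatio]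
  linarith [wallisRatio.le_add_one ((k - 1) / 2)]

lemma gammaBar_sub_gammaBar_add_two_le {n : ℕ} (hn : 1 ≤ n) :
    gammaBar n - gammaBar (n + 2) ≤ 1 / n := by
  have hn' : (0 : ℝ) < n := by exact_mod_cast hn
  have hγ := gammaSeq_le hn
  calc gammaBar n - gammaBar (n + 2)
      ≤ gammaSeq n / n - gammaSeq n / (n + 2) := by
        rw [gammaBar, gammaBar, Nat.cast_add, Nat.cast_two]
        gcongr
        exact gammaSeq_le_gammaSeq_add_two n
    _ = 2 * gammaSeq n / (n * (n + 2)) := by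
        field_simp
        ring
    _ ≤ 1 / n := by
        rw [div_le_div_iff₀ (by positivity) hn']
        nlinarith

lemma gammaBar_sub_gammaBar_add_two_mul_le {n : ℕ} (hn : 1 ≤ n) (s : ℕ) :
    gammaBar n - gammaBar (n + 2 * s) ≤ s / n := by
  induction s with
  | zero => simp
  | succ s ih =>
    have hstep := gammaBar_sub_gammaBar_add_two_le (n := n + 2 * s) (by omega)
    have hshift : (1 : ℝ) / ((n + 2 * s : ℕ) : ℝ) ≤ 1 / n :=
      one_div_le_one_div_of_le (by exact_mod_cast hn) (by push_cast; linarith)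
    rw [show n + 2 * (s + 1) = n + 2 * s + 2 by ring, Nat.cast_succ, add_div]
    linarith

/-- For all integers `k ≥ 2` and `m ≥ 0`:
`γ̄_k − γ̄_{k+2⌊(m+1)/2⌋} ≤ m(m+1)/(2k)` and
`γ̄_{k+1} − γ̄_{k+2⌊m/2⌋+1} ≤ m²/(2k)`. -/
theorem stmt14 (k m : ℕ) (hk : 2 ≤ k) :
    gammaBar k - gammaBar (k + 2 * ((m + 1) / 2)) ≤ (m : ℝ) * ((m : ℝ) + 1) / (2 * k) ∧
    gammaBar (k + 1) - gammaBar (k + 2 * (m / 2) + 1) ≤ (m : ℝ) ^ 2 / (2 * k) := by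
  have hk' : (0 : ℝ) < k := by positivity
  constructor
  · refine (gammaBar_sub_gammaBar_add_two_mul_le (by omega) _).trans ?_
    have hs : 2 * (((m + 1) / 2 : ℕ) : ℝ) ≤ m * (m + 1) := by
      exact_mod_cast (by nlinarith [Nat.le_mul_self m, (by omega : 2 * ((m + 1) / 2) ≤ 2 * m)] :
        2 * ((m + 1) / 2) ≤ m * (m + 1))
    rw [div_le_div_iff₀ hk' (by positivity)]
    nlinarith
  · rw [show k + 2 * (m / 2) + 1 = k + 1 + 2 * (m / 2) by ring]
    refine (gammaBar_sub_gammaBar_add_two_mul_le (by omega) _).trans ?_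
    have hs : 2 * ((m / 2 : ℕ) : ℝ) ≤ m ^ 2 := by
      exact_mod_cast (by nlinarith [Nat.le_mul_self m, (by omega : 2 * (m / 2) ≤ m)] :
        2 * (m / 2) ≤ m ^ 2)
    rw [div_le_div_iff₀ (by positivity) (by positivity)]
    push_cast
    nlinarith
end

section
/- Let n ≥ 1 and let u : {1,…,n} × {1,2,…} → ℚ satisfy u(1,1) = 1, u(i,1) = 0 for 2 ≤ i ≤ n, and for p ≥ 2: u(1,p) = p + u(n,p−1) and u(i,p) = ((p+1)/p)·u(i−1,p−1) for 2 ≤ i ≤ n. Then for every i ∈ {1,…,n} and every p ≥ 1 with p ≡ i−1 (mod n), one has u(i,p) = (p−i+1)(p+1)/(n+1). -/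
open Finset

/-- Let `n ≥ 1` and let `u : {1,…,n} × {1,2,…} → ℚ` satisfy
`u(1,1) = 1`, `u(i,1) = 0` for `2 ≤ i ≤ n`, and for `p ≥ 2`:
`u(1,p) = p + u(n,p−1)` and `u(i,p) = ((p+1)/p)·u(i−1,p−1)` for `2 ≤ i ≤ n`
(these are the expected Borda utilities under the strictly alternating policy
`123…n123…n…`).  Then for every `i ∈ {1,…,n}` and every `p ≥ 1` with
`p ≡ i−1 (mod n)`, one has `u(i,p) = (p−i+1)(p+1)/(n+1)`. -/
theorem stmt15 (n : ℕ) (hn : 1 ≤ n) (u : ℕ → ℕ → ℚ)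
    (h11 : u 1 1 = 1)
    (hi1 : ∀ i : ℕ, 2 ≤ i → i ≤ n → u i 1 = 0)
    (hrec1 : ∀ p : ℕ, 2 ≤ p → u 1 p = (p : ℚ) + u n (p - 1))
    (hreci : ∀ i p : ℕ, 2 ≤ i → i ≤ n → 2 ≤ p →
      u i p = (((p : ℚ) + 1) / (p : ℚ)) * u (i - 1) (p - 1)) :
    ∀ i p : ℕ, 1 ≤ i → i ≤ n → 1 ≤ p → p % n = (i - 1) % n →
      u i p = ((p : ℚ) - (i : ℚ) + 1) * ((p : ℚ) + 1) / ((n : ℚ) + 1) := by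
  have hn1 : (n : ℚ) + 1 ≠ 0 := by positivity
  intro i p
  induction p using Nat.strong_induction_on generalizing i with
  | _ p ih =>
    intro hi hin hp hmod
    rcases Nat.lt_or_ge p 2 with hp2 | hp2
    · -- p = 1
      have hp1 : p = 1 := by omega
      subst hp1
      have him : (i - 1) % n = i - 1 := Nat.mod_eq_of_lt (by omega)
      rcases Nat.lt_or_ge n 2 with hn2 | hn2
      · have hne : n = 1 := by omega
        have hie : i = 1 := by omega
        subst hne; subst hie
        rw [h11]; norm_num
      · have h1 : 1 % n = 1 := Nat.mod_eq_of_lt (by omega)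
        rw [him, h1] at hmod
        have hie : i = 2 := by omega
        subst hie
        rw [hi1 2 le_rfl hin]
        norm_num
    · rcases Nat.lt_or_ge i 2 with hi2 | hi2
      · -- i = 1
        have hie : i = 1 := by omega
        subst hie
        have hpn : p % n = 0 := by simpa using hmod
        obtain ⟨k, hk⟩ := Nat.dvd_of_mod_eq_zero hpn
        have hk1 : 1 ≤ k := by
          rcases Nat.eq_zero_or_pos k with h | h
          · subst h; simp at hk; omega
          · exact h
        obtain ⟨k', rfl⟩ : ∃ k', k = k' + 1 := ⟨k - 1, by omega⟩
        have hk' : p = n * k' + n := by rw [hk]; ring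
        have hsplit : p - 1 = n * k' + (n - 1) := by omega
        have hm : (p - 1) % n = (n - 1) % n := by
          rw [hsplit, Nat.mul_add_mod]
        have key := ih (p - 1) (by omega) n hn le_rfl (by omega) hm
        rw [hrec1 p hp2, key]
        rw [Nat.cast_sub (show 1 ≤ p by omega)]
        push_cast
        field_simp
        ring
      · -- 2 ≤ i
        have him : (i - 1) % n = i - 1 := Nat.mod_eq_of_lt (by omega)
        have hpm : p % n = i - 1 := by rw [hmod, him]
        have hq := Nat.div_add_mod p n
        have hsplit : p - 1 = n * (p / n) + (i - 2) := by omega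
        have hm : (p - 1) % n = (i - 1 - 1) % n := by
          have h12 : i - 1 - 1 = i - 2 := by omega
          rw [h12, hsplit, Nat.mul_add_mod]
        have key := ih (p - 1) (by omega) (i - 1) (by omega) (by omega)
          (by omega) hm
        rw [hreci i p hi2 hin hp2, key]
        rw [Nat.cast_sub (show 1 ≤ p by omega),
          Nat.cast_sub (show 1 ≤ i by omega)]
        have hpQ : (p : ℚ) ≠ 0 := Nat.cast_ne_zero.mpr (by omega)
        push_cast
        field_simp
        ring
end

section
/- Let n ≥ 1 and let u : {1,…,n} × {1,2,…} → ℚ satisfy u(1,1) = 1, u(i,1) = 0 for 2 ≤ i ≤ n, and for p ≥ 2: u(1,p) = p + u(n,p−1) and u(i,p) = ((p+1)/p)·u(i−1,p−1) for 2 ≤ i ≤ n. Then for every i ∈ {1,…,n} and every p ≥ 1: p²/(n+1) − 2p ≤ u(i,p) ≤ p²/(n+1) + 2p + n. In particular u(i,p) = p²/(n+1) + O(p) for fixed n. -/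
/-! Agent `i` at step `p` is agent `1` delayed by `i - 1` steps: iterating the second recursion
gives `u i p = (p + 1) / (q + 1) * u 1 q` with `q = p - i + 1`. The first agent's utility
`v = u 1` satisfies `v q = q` for `q ≤ n` and `v (q + n) = (q + n) + (q + n) / (q + 1) * v q`,
and an induction in steps of `n` keeps the normalised value `(n + 1) * v q / (q + 1)` within
`n + 1` of `q`. Multiplying back by `(p + 1) / (n + 1)` gives the bounds. -/

theorem scaled_bounds_of_recurrence (n : ℕ) (hn : 1 ≤ n) (v : ℕ → ℚ)
    (hsmall : ∀ q, 1 ≤ q → q ≤ n → v q = q)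
    (hrec : ∀ q, 1 ≤ q → v (q + n) = (q + n) + (q + n) / (q + 1) * v q) :
    ∀ q, 1 ≤ q → 0 ≤ v q ∧ ((q : ℚ) - n - 1) * (q + 1) ≤ (n + 1) * v q ∧
      (n + 1) * v q ≤ ((q : ℚ) + n + 1) * (q + 1) := by
  intro q
  induction q using Nat.strong_induction_on with
  | _ q ih =>
    intro hq
    have hq' : (1 : ℚ) ≤ q := by exact_mod_cast hq
    rcases le_or_gt q n with hqn | hnq
    · have hqn' : (q : ℚ) ≤ n := by exact_mod_cast hqn
      rw [hsmall q hq hqn]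
      refine ⟨by positivity, by nlinarith, by nlinarith⟩
    · obtain ⟨r, rfl⟩ : ∃ r, q = r + n := ⟨q - n, by omega⟩
      have hr : 1 ≤ r := by omega
      have hr' : (1 : ℚ) ≤ r := by exact_mod_cast hr
      obtain ⟨h0, hlo, hhi⟩ := ih r (by omega) hr
      have hscaled : (r + 1 : ℚ) * v (r + n) = (r + n) * (r + 1 + v r) := by
        rw [hrec r hr]; field_simp
      push_cast
      refine ⟨?_, ?_, ?_⟩ <;> nlinarith

namespace BordaUtility

variable {n : ℕ} {u : ℕ → ℕ → ℚ}

theorem eq_zero_of_lt (hi1 : ∀ i : ℕ, 2 ≤ i → i ≤ n → u i 1 = 0)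
    (hreci : ∀ i p : ℕ, 2 ≤ i → i ≤ n → 2 ≤ p →
      u i p = (((p : ℚ) + 1) / (p : ℚ)) * u (i - 1) (p - 1)) :
    ∀ p i, 2 ≤ i → i ≤ n → 1 ≤ p → p < i → u i p = 0 := by
  intro p
  induction p with
  | zero => intros; omega
  | succ p ih =>
    intro i hi hin _ hpi
    rcases Nat.eq_zero_or_pos p with rfl | hp
    · exact hi1 i hi hin
    · rw [hreci i (p + 1) hi hin (by omega), Nat.add_sub_cancel,
        ih (i - 1) (by omega) (by omega) hp (by omega), mul_zero]

theorem eq_div_mul_first (hreci : ∀ i p : ℕ, 2 ≤ i → i ≤ n → 2 ≤ p →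
      u i p = (((p : ℚ) + 1) / (p : ℚ)) * u (i - 1) (p - 1)) :
    ∀ i q, 1 ≤ i → i ≤ n → 1 ≤ q → u i (q + i - 1) = (q + i) / (q + 1) * u 1 q := by
  intro i
  induction i with
  | zero => intros; omega
  | succ i ih =>
    intro q _ hin hq
    rcases Nat.eq_zero_or_pos i with rfl | hi
    · have : (q + 1 : ℚ) ≠ 0 := by positivity
      simp [this]
    · have hpos : (0 : ℚ) < q + i := by positivity
      rw [show q + (i + 1) - 1 = q + i by omega, hreci (i + 1) (q + i) (by omega) hin (by omega),
        Nat.add_sub_cancel, ih q hi (by omega) hq]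
      push_cast
      field_simp
      ring

theorem first_eq_of_le (h11 : u 1 1 = 1)
    (hi1 : ∀ i : ℕ, 2 ≤ i → i ≤ n → u i 1 = 0)
    (hrec1 : ∀ p : ℕ, 2 ≤ p → u 1 p = (p : ℚ) + u n (p - 1))
    (hreci : ∀ i p : ℕ, 2 ≤ i → i ≤ n → 2 ≤ p →
      u i p = (((p : ℚ) + 1) / (p : ℚ)) * u (i - 1) (p - 1)) :
    ∀ q, 1 ≤ q → q ≤ n → u 1 q = q := by
  intro q hq hqn
  obtain rfl | hq2 := eq_or_lt_of_le hq
  · simpa using h11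
  · rw [hrec1 q hq2, eq_zero_of_lt hi1 hreci (q - 1) n (by omega) le_rfl (by omega) (by omega),
      add_zero]

theorem first_add (hn : 1 ≤ n) (hrec1 : ∀ p : ℕ, 2 ≤ p → u 1 p = (p : ℚ) + u n (p - 1))
    (hreci : ∀ i p : ℕ, 2 ≤ i → i ≤ n → 2 ≤ p →
      u i p = (((p : ℚ) + 1) / (p : ℚ)) * u (i - 1) (p - 1)) :
    ∀ q, 1 ≤ q → u 1 (q + n) = (q + n) + (q + n) / (q + 1) * u 1 q := by
  intro q hq
  rw [hrec1 (q + n) (by omega), eq_div_mul_first hreci n q hn le_rfl hq]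
  push_cast
  rfl

theorem scaled_bounds (hn : 1 ≤ n) (h11 : u 1 1 = 1)
    (hi1 : ∀ i : ℕ, 2 ≤ i → i ≤ n → u i 1 = 0)
    (hrec1 : ∀ p : ℕ, 2 ≤ p → u 1 p = (p : ℚ) + u n (p - 1))
    (hreci : ∀ i p : ℕ, 2 ≤ i → i ≤ n → 2 ≤ p →
      u i p = (((p : ℚ) + 1) / (p : ℚ)) * u (i - 1) (p - 1)) (i p : ℕ)
    (hi : 1 ≤ i) (hin : i ≤ n) (hp : 1 ≤ p) :
    0 ≤ u i p ∧ ((p : ℚ) + 1) * (p - i - n) ≤ (n + 1) * u i p ∧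
      (n + 1) * u i p ≤ ((p : ℚ) + 1) * (p - i + n + 2) := by
  have hin' : (i : ℚ) ≤ n := by exact_mod_cast hin
  rcases lt_or_ge p i with hpi | hip
  · have hpi' : (p : ℚ) < i := by exact_mod_cast hpi
    rw [eq_zero_of_lt hi1 hreci p i (by omega) hin hp hpi]
    refine ⟨le_rfl, ?_, ?_⟩ <;> nlinarith
  · obtain ⟨q, rfl⟩ : ∃ q, p = q + i - 1 := ⟨p + 1 - i, by omega⟩
    have hq : 1 ≤ q := by omega
    obtain ⟨h0, hlo, hhi⟩ := scaled_bounds_of_recurrence n hn (u 1)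
      (first_eq_of_le h11 hi1 hrec1 hreci) (first_add hn hrec1 hreci) q hq
    have hscaled : ((q : ℚ) + 1) * u i (q + i - 1) = (q + i) * u 1 q := by
      rw [eq_div_mul_first hreci i q hi hin hq]; field_simp
    have hq' : (1 : ℚ) ≤ q := by exact_mod_cast hq
    rw [Nat.cast_sub (by omega)]
    push_cast
    refine ⟨?_, ?_, ?_⟩ <;> nlinarith

end BordaUtility

/-- Let `n ≥ 1` and let `u : {1,…,n} × {1,2,…} → ℚ` satisfy
`u(1,1) = 1`, `u(i,1) = 0` for `2 ≤ i ≤ n`, and for `p ≥ 2`: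
`u(1,p) = p + u(n,p−1)` and `u(i,p) = ((p+1)/p)·u(i−1,p−1)` for `2 ≤ i ≤ n`
(these are the expected Borda utilities under the strictly alternating policy
`123…n123…n…`).  Then for every `i ∈ {1,…,n}` and every `p ≥ 1`:
`p²/(n+1) − 2p ≤ u(i,p) ≤ p²/(n+1) + 2p + n`; in particular
`u(i,p) = p²/(n+1) + O(p)` for fixed `n`. -/
theorem stmt16 (n : ℕ) (hn : 1 ≤ n) (u : ℕ → ℕ → ℚ)
    (h11 : u 1 1 = 1)
    (hi1 : ∀ i : ℕ, 2 ≤ i → i ≤ n → u i 1 = 0)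
    (hrec1 : ∀ p : ℕ, 2 ≤ p → u 1 p = (p : ℚ) + u n (p - 1))
    (hreci : ∀ i p : ℕ, 2 ≤ i → i ≤ n → 2 ≤ p →
      u i p = (((p : ℚ) + 1) / (p : ℚ)) * u (i - 1) (p - 1)) :
    ∀ i p : ℕ, 1 ≤ i → i ≤ n → 1 ≤ p →
      (p : ℚ) ^ 2 / ((n : ℚ) + 1) - 2 * (p : ℚ) ≤ u i p ∧
      u i p ≤ (p : ℚ) ^ 2 / ((n : ℚ) + 1) + 2 * (p : ℚ) + (n : ℚ) := by
  intro i p hi hin hp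
  obtain ⟨h0, hlo, hhi⟩ := BordaUtility.scaled_bounds hn h11 hi1 hrec1 hreci i p hi hin hp
  have hn' : (1 : ℚ) ≤ n := by exact_mod_cast hn
  have hi' : (1 : ℚ) ≤ i := by exact_mod_cast hi
  have hin' : (i : ℚ) ≤ n := by exact_mod_cast hin
  have hp' : (1 : ℚ) ≤ p := by exact_mod_cast hp
  have hpos : (0 : ℚ) < n + 1 := by positivity
  constructor
  · rw [div_sub' hpos.ne', div_le_iff₀ hpos]
    rcases le_total (p : ℚ) (2 * (n + 1)) with hsmall | hlarge <;> nlinarith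
  · rw [div_add' _ _ _ hpos.ne', div_add' _ _ _ hpos.ne', le_div_iff₀ hpos]
    nlinarith
end

section
/- Let n ≥ 1 and let u : {1,…,n} × {1,2,…} → ℚ satisfy u(1,1) = 1, u(i,1) = 0 for 2 ≤ i ≤ n, and for p ≥ 2: u(1,p) = p + u(n,p−1) and u(i,p) = ((p+1)/p)·u(i−1,p−1) for 2 ≤ i ≤ n. Then for every p ≥ 1: |Σ_{i=1}^n u(i,p) − np²/(n+1)| ≤ n(2p+n); in particular the expected utilitarian social welfare of the strictly alternating policy equals np²/(n+1) + O(p) for fixed n. -/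
/-!
Normalise by `v(i,p) = u(i,p)/(p+1)`. For `i ≥ 2` the recursion becomes `v(i,p) = v(i-1,p-1)`, so `v`
is constant along diagonals, and for `i = 1` it becomes `v(1,p) = p/(p+1) · (1 + v(n,p-1))`.
Induction on `p` then traps `v(i,p)` between the linear profile `(p+1-i)/(n+1)` and that profile
plus one; multiplying back by `p+1`, each `u(i,p)` is within `2p+n` of `p²/(n+1)`.
-/

open Finset

theorem Finset.abs_sum_sub_card_mul_le {ι K : Type*} [Field K] [LinearOrder K] [IsStrictOrderedRing K]
    (s : Finset ι) (f : ι → K) {c B : K} (h : ∀ i ∈ s, |f i - c| ≤ B) :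
    |∑ i ∈ s, f i - #s * c| ≤ #s * B := by
  calc |∑ i ∈ s, f i - #s * c| = |∑ i ∈ s, (f i - c)| := by
        rw [sum_sub_distrib, sum_const, nsmul_eq_mul]
    _ ≤ ∑ i ∈ s, |f i - c| := abs_sum_le_sum_abs _ _
    _ ≤ ∑ _i ∈ s, B := sum_le_sum h
    _ = #s * B := by rw [sum_const, nsmul_eq_mul]

theorem mem_Icc_div_div_add_one_iff {K : Type*} [Field K] [LinearOrder K] [IsStrictOrderedRing K]
    {x d N : K} (hN : 0 < N) : x ∈ Set.Icc (d / N) (d / N + 1) ↔ d ≤ N * x ∧ N * x ≤ d + N := by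
  rw [Set.mem_Icc, div_le_iff₀ hN, ← sub_le_iff_le_add, le_div_iff₀ hN, sub_mul, one_mul,
    sub_le_iff_le_add, mul_comm x]

theorem abs_succ_mul_sub_sq_div_le {K : Type*} [Field K] [LinearOrder K] [IsStrictOrderedRing K]
    {n p i v : K} (hp : 0 ≤ p) (hi : 1 ≤ i) (hin : i ≤ n)
    (hv : v ∈ Set.Icc ((p + 1 - i) / (n + 1)) ((p + 1 - i) / (n + 1) + 1)) :
    |(p + 1) * v - p ^ 2 / (n + 1)| ≤ 2 * p + n := by
  have hN : 0 < n + 1 := by linarith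
  obtain ⟨hlo, hhi⟩ := (mem_Icc_div_div_add_one_iff hN).mp hv
  have key : (n + 1) * ((p + 1) * v - p ^ 2 / (n + 1)) = (p + 1) * ((n + 1) * v) - p ^ 2 := by
    field_simp
  rw [abs_le]
  constructor <;> refine le_of_mul_le_mul_left ?_ hN <;> rw [key] <;> nlinarith

structure IsAlternatingBordaUtility (n : ℕ) (u : ℕ → ℕ → ℚ) : Prop where
  one_one : u 1 1 = 1
  of_one : ∀ i : ℕ, 2 ≤ i → i ≤ n → u i 1 = 0
  one_of_two_le : ∀ p : ℕ, 2 ≤ p → u 1 p = (p : ℚ) + u n (p - 1)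
  of_two_le : ∀ i p : ℕ, 2 ≤ i → i ≤ n → 2 ≤ p →
    u i p = (((p : ℚ) + 1) / (p : ℚ)) * u (i - 1) (p - 1)

namespace IsAlternatingBordaUtility

variable {n : ℕ} {u : ℕ → ℕ → ℚ}

theorem div_succ_of_two_le (hu : IsAlternatingBordaUtility n u) {i p : ℕ} (hi : 2 ≤ i)
    (hin : i ≤ n) (hp : 1 ≤ p) :
    u i (p + 1) / ((p + 1 : ℕ) + 1) = u (i - 1) p / (p + 1) := by
  rw [hu.of_two_le i (p + 1) hi hin (by omega), Nat.add_sub_cancel]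
  push_cast
  field_simp

theorem one_succ_div (hu : IsAlternatingBordaUtility n u) {p : ℕ} (hp : 1 ≤ p) :
    u 1 (p + 1) / ((p + 1 : ℕ) + 1) = (p + 1) / (p + 2) * (1 + u n p / (p + 1)) := by
  rw [hu.one_of_two_le (p + 1) (by omega), Nat.add_sub_cancel]
  push_cast
  field_simp
  ring

theorem div_succ_mem_Icc (hu : IsAlternatingBordaUtility n u) (hn : 1 ≤ n) {p : ℕ} (hp : 1 ≤ p)
    {i : ℕ} (hi : 1 ≤ i) (hin : i ≤ n) :
    u i p / (p + 1) ∈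
      Set.Icc (((p : ℚ) + 1 - i) / (n + 1)) (((p : ℚ) + 1 - i) / (n + 1) + 1) := by
  have hN : (0 : ℚ) < n + 1 := by positivity
  have hn' : (1 : ℚ) ≤ n := by exact_mod_cast hn
  induction p, hp using Nat.le_induction generalizing i with
  | base =>
    have hi' : (i : ℚ) ≤ n := by exact_mod_cast hin
    rw [mem_Icc_div_div_add_one_iff hN]
    rcases hi.eq_or_lt with rfl | hi2
    · rw [hu.one_one]
      constructor <;> push_cast <;> linarith
    · have hi2' : (2 : ℚ) ≤ i := by exact_mod_cast hi2
      rw [hu.of_one i hi2 hin, zero_div, mul_zero]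
      constructor <;> push_cast <;> linarith
  | succ p hp ih =>
    rcases hi.eq_or_lt with rfl | hi2
    · obtain ⟨hlo, hhi⟩ := (mem_Icc_div_div_add_one_iff hN).mp (ih hn le_rfl)
      rw [hu.one_succ_div hp, mem_Icc_div_div_add_one_iff hN]
      have hp' : (1 : ℚ) ≤ p := by exact_mod_cast hp
      set t : ℚ := (p + 1) / (p + 2)
      have ht : t * (p + 2) = p + 1 := div_mul_cancel₀ _ (by positivity)
      have ht1 : t ≤ 1 := (div_le_one (by positivity)).mpr (by linarith)
      have ht0 : 0 ≤ t := by positivity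
      push_cast
      constructor <;> nlinarith
    · have hd : ((p + 1 : ℕ) : ℚ) + 1 - i = p + 1 - ((i - 1 : ℕ) : ℚ) := by
        push_cast [Nat.cast_sub hi]; ring
      rw [hu.div_succ_of_two_le hi2 hin hp, hd]
      exact ih (by omega) (by omega)

end IsAlternatingBordaUtility

/-- Let `n ≥ 1` and let `u : {1,…,n} × {1,2,…} → ℚ` satisfy
`u(1,1) = 1`, `u(i,1) = 0` for `2 ≤ i ≤ n`, and for `p ≥ 2`:
`u(1,p) = p + u(n,p−1)` and `u(i,p) = ((p+1)/p)·u(i−1,p−1)` for `2 ≤ i ≤ n`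
(these are the expected Borda utilities under the strictly alternating policy
`123…n123…n…`).  Then for every `p ≥ 1`:
`|Σ_{i=1}^n u(i,p) − np²/(n+1)| ≤ n(2p+n)`; in particular the expected
utilitarian social welfare of the strictly alternating policy is
`np²/(n+1) + O(p)` for fixed `n`. -/
theorem stmt17 (n : ℕ) (hn : 1 ≤ n) (u : ℕ → ℕ → ℚ)
    (h11 : u 1 1 = 1)
    (hi1 : ∀ i : ℕ, 2 ≤ i → i ≤ n → u i 1 = 0)
    (hrec1 : ∀ p : ℕ, 2 ≤ p → u 1 p = (p : ℚ) + u n (p - 1))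
    (hreci : ∀ i p : ℕ, 2 ≤ i → i ≤ n → 2 ≤ p →
      u i p = (((p : ℚ) + 1) / (p : ℚ)) * u (i - 1) (p - 1)) :
    ∀ p : ℕ, 1 ≤ p →
      |(∑ i ∈ Finset.Icc 1 n, u i p) - (n : ℚ) * (p : ℚ) ^ 2 / ((n : ℚ) + 1)|
        ≤ (n : ℚ) * (2 * (p : ℚ) + (n : ℚ)) := by
  intro p hp
  have hu : IsAlternatingBordaUtility n u := ⟨h11, hi1, hrec1, hreci⟩
  have hterm : ∀ i ∈ Icc 1 n, |u i p - (p : ℚ) ^ 2 / (n + 1)| ≤ 2 * (p : ℚ) + n := by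
    intro i hi
    obtain ⟨hi1, hin⟩ := mem_Icc.mp hi
    rw [← mul_div_cancel₀ (u i p) (by positivity : (p : ℚ) + 1 ≠ 0)]
    exact abs_succ_mul_sub_sq_div_le (by positivity) (by exact_mod_cast hi1)
      (by exact_mod_cast hin) (hu.div_succ_mem_Icc hn hp hi1 hin)
  simpa [mul_div_assoc] using abs_sum_sub_card_mul_le (Icc 1 n) (fun i ↦ u i p) hterm
end

section
/- There exists a constant C > 0 such that for all k ≥ 1: |γ_k − √(2k/π)| ≤ C/√k; that is, γ_k = √(2k/π) + O(1/√k) as k → ∞. -/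
open Finset

/-
The empty product makes `γ_k` the partial Wallis product `P_n = ∏_{j ≤ n} (2j+1)/(2j)` with
`n = ⌊(k-1)/2⌋`. Against Mathlib's Wallis product `W_n` one has `P_n² W_n = 2n + 1`, and the
Wallis bounds `(2n+1)/(2n+2) · π/2 ≤ W_n ≤ π/2` put `π P_n²` in `[2(2n+1), 2(2n+2)]`, an interval
that also contains `2k`. Hence `|γ_k² - 2k/π| ≤ 2/π`, and taking square roots divides this error
by `√(2k/π)`, which gives the bound with `C = 1`.
-/

open Real

lemma abs_sqrt_sub_sqrt_le {x y : ℝ} (hx : 0 ≤ x) (hy : 0 < y) :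
    |√x - √y| ≤ |x - y| / √y := by
  have hsy : 0 < √y := sqrt_pos.2 hy
  have hsum : 0 < √x + √y := add_pos_of_nonneg_of_pos (sqrt_nonneg x) hsy
  rw [le_div_iff₀ hsy]
  calc |√x - √y| * √y ≤ |√x - √y| * (√x + √y) := by
        gcongr
        exact le_add_of_nonneg_left (sqrt_nonneg x)
    _ = |x - y| := by
        rw [← abs_of_pos hsum, ← abs_mul]
        congr 1
        linear_combination sq_sqrt hx - sq_sqrt hy.le

noncomputable def wallisPartialProd (n : ℕ) : ℝ :=
  ∏ j ∈ Icc 1 n, (2 * (j : ℝ) + 1) / (2 * j)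

lemma wallisPartialProd_sq_mul_W (n : ℕ) :
    wallisPartialProd n ^ 2 * Wallis.W n = 2 * n + 1 := by
  induction n with
  | zero => simp [wallisPartialProd, Wallis.W]
  | succ n ih =>
    rw [wallisPartialProd, prod_Icc_succ_top (by omega), Wallis.W_succ, mul_pow,
      mul_mul_mul_comm, ← wallisPartialProd, ih]
    push_cast
    field_simp
    ring

lemma pi_mul_wallisPartialProd_sq_mem_Icc (n : ℕ) :
    π * wallisPartialProd n ^ 2 ∈ Set.Icc (2 * (2 * n + 1) : ℝ) (2 * (2 * n + 2)) := by
  have hP := wallisPartialProd_sq_mul_W n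
  have hsq := sq_nonneg (wallisPartialProd n)
  have hn : (0 : ℝ) < 2 * n + 1 := by positivity
  have hW_le := Wallis.W_le n
  have hle_W := Wallis.le_W n
  rw [div_mul_eq_mul_div, div_le_iff₀ (by positivity)] at hle_W
  constructor <;> nlinarith

lemma gammaSeq_eq_wallisPartialProd (k : ℕ) : gammaSeq k = wallisPartialProd ((k - 1) / 2) := rfl

lemma gammaSeq_pos (k : ℕ) : 0 < gammaSeq k :=
  prod_pos fun j hj => by
    have : (0 : ℝ) < j := by exact_mod_cast (mem_Icc.1 hj).1
    positivity

lemma abs_gammaSeq_sq_sub_le {k : ℕ} (hk : 1 ≤ k) :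
    |gammaSeq k ^ 2 - 2 * k / π| ≤ 2 / π := by
  set n := (k - 1) / 2
  have hlo : (2 * n + 1 : ℝ) ≤ k := by norm_cast; omega
  have hhi : (k : ℝ) ≤ 2 * n + 2 := by norm_cast; omega
  obtain ⟨hPlo, hPhi⟩ := pi_mul_wallisPartialProd_sq_mem_Icc n
  rw [← gammaSeq_eq_wallisPartialProd] at hPlo hPhi
  have hdiff : gammaSeq k ^ 2 - 2 * k / π = (π * gammaSeq k ^ 2 - 2 * k) / π := by
    field_simp
  rw [hdiff, abs_div, abs_of_pos pi_pos]
  gcongr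
  rw [abs_le]
  constructor <;> linarith

/-- There exists a constant `C > 0` such that for all `k ≥ 1`,
`|γ_k − √(2k/π)| ≤ C/√k`; that is, `γ_k = √(2k/π) + O(1/√k)` as `k → ∞`. -/
theorem stmt18 :
    ∃ C : ℝ, 0 < C ∧ ∀ k : ℕ, 1 ≤ k →
      |gammaSeq k - Real.sqrt (2 * (k : ℝ) / Real.pi)| ≤ C / Real.sqrt k := by
  refine ⟨1, one_pos, fun k hk => ?_⟩
  have hk0 : (0 : ℝ) < k := by exact_mod_cast hk
  have hsplit : √(2 * k / π) = √(2 / π) * √k := by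
    rw [mul_div_right_comm, sqrt_mul (by positivity)]
  have hratio : √(2 / π) ≤ 1 := sqrt_le_one.2 ((div_le_one pi_pos).2 two_le_pi)
  calc |gammaSeq k - √(2 * k / π)| = |√(gammaSeq k ^ 2) - √(2 * k / π)| := by
        rw [sqrt_sq (gammaSeq_pos k).le]
    _ ≤ |gammaSeq k ^ 2 - 2 * k / π| / √(2 * k / π) :=
        abs_sqrt_sub_sqrt_le (sq_nonneg _) (by positivity)
    _ ≤ 2 / π / (√(2 / π) * √k) := by
        rw [hsplit]
        gcongr
        exact abs_gammaSeq_sq_sub_le hk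
    _ = √(2 / π) / √k := by rw [← div_div, div_sqrt]
    _ ≤ 1 / √k := by gcongr
end
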